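/- arXiv:1701.06996 — 5 statements merged into one kernel-verified Lean document; each statement's English description precedes it below -/
import Mathlib

section
/- Let (a_{p,n})_{p,n∈ℕ} be a double sequence of positive reals. Then there exist h, λ > 0 such that sup_{p,n} a_{p,n} e^{M(λ n)} / h^p < ∞ if and only if for all sequences (r_j), (s_j) increasing to infinity with r_0 = s_0 = 1, sup_{p,n} a_{p,n} e^{M_{s_j}(n)} / ∏_{j=0}^p r_j < ∞, where M_{s_j} denotes the associated function of the weight sequence M_p ∏_{j=0}^p s_j. -/
open Filter Finset

/-- Associated function `M(t) = sup_p log (t^p / M_p)`, with `M(t)=0` for `t ≤ 0`. -/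
noncomputable def assocFn (M : ℕ → ℝ) (t : ℝ) : ℝ :=
  if t ≤ 0 then 0 else ⨆ p : ℕ, Real.log (t ^ p / M p)

/-- The family `R` of sequences with `r 0 = 1` increasing to infinity. -/
def IsRSeq (r : ℕ → ℝ) : Prop :=
  (∀ j, 0 < r j) ∧ r 0 = 1 ∧ Monotone r ∧ Tendsto r atTop atTop

lemma auxBdd (M : ℕ → ℝ) (hpos : ∀ p, 0 < M p)
    (hquot : Tendsto (fun p : ℕ => M (p + 1) / M p) atTop atTop)
    (t : ℝ) (ht : 0 < t) :
    ∃ B : ℝ, ∀ p : ℕ, Real.log (t ^ p / M p) ≤ B := by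
  obtain ⟨N, hN⟩ := Filter.eventually_atTop.mp (hquot.eventually_ge_atTop (2 * t + 1))
  have key : ∀ p, N ≤ p → t ^ p / M p ≤ t ^ N / M N := by
    intro p hp
    induction p with
    | zero =>
      have : N = 0 := Nat.le_zero.mp hp
      simp [this]
    | succ p ih =>
      rcases Nat.lt_or_ge N (p + 1) with h' | h'
      · have hNp : N ≤ p := by omega
        have hih := ih hNp
        have hr := hN p hNp
        have hMp := hpos p; have hMp1 := hpos (p + 1)
        have h2 : (2 * t + 1) * M p ≤ M (p + 1) := by
          rw [le_div_iff₀ hMp] at hr; linarith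
        have hstep : t ^ (p + 1) / M (p + 1) ≤ t ^ p / M p := by
          rw [div_le_div_iff₀ hMp1 hMp, pow_succ]
          nlinarith [pow_pos ht p, hMp.le]
        linarith
      · have hNe : N = p + 1 := by omega
        simp [hNe]
  refine ⟨((Finset.range (N + 1)).sup' ⟨0, by simp⟩ fun p => Real.log (t ^ p / M p)), ?_⟩
  intro p
  rcases Nat.lt_or_ge p (N + 1) with h' | h'
  · exact Finset.le_sup' (fun p => Real.log (t ^ p / M p)) (Finset.mem_range.mpr h')
  · have h1 : Real.log (t ^ p / M p) ≤ Real.log (t ^ N / M N) :=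
      Real.log_le_log (div_pos (pow_pos ht p) (hpos p)) (key p (by omega))
    have h2 : Real.log (t ^ N / M N)
        ≤ (Finset.range (N + 1)).sup' ⟨0, by simp⟩ (fun p => Real.log (t ^ p / M p)) :=
      Finset.le_sup' (fun p => Real.log (t ^ p / M p)) (Finset.mem_range.mpr (by omega))
    linarith

lemma assocFn_of_pos (M : ℕ → ℝ) (t : ℝ) (ht : 0 < t) :
    assocFn M t = ⨆ p : ℕ, Real.log (t ^ p / M p) := if_neg (not_le.mpr ht)

lemma le_assocFn (M : ℕ → ℝ) (t : ℝ) (ht : 0 < t)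
    (hbdd : BddAbove (Set.range fun p : ℕ => Real.log (t ^ p / M p))) (p : ℕ) :
    Real.log (t ^ p / M p) ≤ assocFn M t := by
  rw [assocFn_of_pos M t ht]; exact le_ciSup hbdd p

lemma assocFn_le (M : ℕ → ℝ) (t B : ℝ) (hB : 0 ≤ B)
    (h : ∀ p : ℕ, Real.log (t ^ p / M p) ≤ B) : assocFn M t ≤ B := by
  unfold assocFn; split
  · exact hB
  · exact ciSup_le h

lemma prod_pow_le (s : ℕ → ℝ) (h1 : ∀ j, 1 ≤ s j) (μ : ℝ) (hμ : 1 ≤ μ) (N : ℕ)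
    (hs : ∀ j, N ≤ j → μ ≤ s j) (p : ℕ) :
    μ ^ p ≤ μ ^ N * ∏ j ∈ Finset.range (p + 1), s j := by
  have hprod1 : ∀ T : Finset ℕ, (1:ℝ) ≤ ∏ j ∈ T, s j := by
    intro T
    have := Finset.prod_le_prod (s := T) (f := fun _ => (1:ℝ)) (g := s)
      (fun j _ => zero_le_one) (fun j _ => h1 j)
    simpa using this
  rcases Nat.lt_or_ge p N with h' | h'
  · have e1 : μ ^ p ≤ μ ^ N := pow_le_pow_right₀ hμ (by omega)
    have e2 : μ ^ N * 1 ≤ μ ^ N * ∏ j ∈ Finset.range (p + 1), s j :=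
      mul_le_mul_of_nonneg_left (hprod1 _) (by positivity)
    linarith
  · have hsplit : (∏ j ∈ Finset.range N, s j) * ∏ j ∈ Finset.Ico N (p + 1), s j
        = ∏ j ∈ Finset.range (p + 1), s j :=
      Finset.prod_range_mul_prod_Ico s (by omega)
    have hIco : μ ^ (p + 1 - N) ≤ ∏ j ∈ Finset.Ico N (p + 1), s j := by
      have e : (∏ j ∈ Finset.Ico N (p + 1), μ) = μ ^ (p + 1 - N) := by
        rw [Finset.prod_const, Nat.card_Ico]
      rw [← e]
      exact Finset.prod_le_prod (fun j _ => by linarith) (fun j hj => hs j (Finset.mem_Ico.mp hj).1)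
    have hIco0 : (0:ℝ) ≤ ∏ j ∈ Finset.Ico N (p + 1), s j := by
      apply Finset.prod_nonneg; intro j _; linarith [h1 j]
    have e3 : μ ^ (p + 1 - N) ≤ ∏ j ∈ Finset.range (p + 1), s j := by
      rw [← hsplit]
      calc μ ^ (p + 1 - N) ≤ ∏ j ∈ Finset.Ico N (p + 1), s j := hIco
        _ ≤ (∏ j ∈ Finset.range N, s j) * ∏ j ∈ Finset.Ico N (p + 1), s j :=
            le_mul_of_one_le_left hIco0 (hprod1 _)
    have e4 : μ ^ p ≤ μ ^ N * μ ^ (p + 1 - N) := by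
      rw [← pow_add]
      apply pow_le_pow_right₀ hμ; omega
    calc μ ^ p ≤ μ ^ N * μ ^ (p + 1 - N) := e4
      _ ≤ μ ^ N * ∏ j ∈ Finset.range (p + 1), s j :=
          mul_le_mul_of_nonneg_left e3 (by positivity)

lemma prod_le_pow (s : ℕ → ℝ) (h0 : ∀ j, 0 ≤ s j) (K : ℝ) (p : ℕ)
    (h : ∀ j, j ≤ p → s j ≤ K) :
    ∏ j ∈ Finset.range (p + 1), s j ≤ K ^ (p + 1) := by
  calc ∏ j ∈ Finset.range (p + 1), s j ≤ ∏ j ∈ Finset.range (p + 1), K :=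
        Finset.prod_le_prod (fun j _ => h0 j)
          (fun j hj => h j (Nat.lt_succ_iff.mp (Finset.mem_range.mp hj)))
    _ = K ^ (p + 1) := by rw [Finset.prod_const, Finset.card_range]

theorem stmt6 (M : ℕ → ℝ) (hpos : ∀ p, 0 < M p) (hM0 : M 0 = 1)
    (hlc : ∀ p : ℕ, 1 ≤ p → (M p) ^ 2 ≤ M (p - 1) * M (p + 1))
    (hquot : Tendsto (fun p : ℕ => M (p + 1) / M p) atTop atTop)
    (a : ℕ → ℕ → ℝ) (ha : ∀ p n, 0 < a p n) :
    (∃ h > (0 : ℝ), ∃ lam > (0 : ℝ), ∃ C : ℝ, ∀ p n : ℕ,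
        a p n * Real.exp (assocFn M (lam * n)) / h ^ p ≤ C) ↔
    (∀ r s : ℕ → ℝ, IsRSeq r → IsRSeq s → ∃ C : ℝ, ∀ p n : ℕ,
        a p n * Real.exp (assocFn (fun q => M q * ∏ j ∈ Finset.range (q + 1), s j) n) /
          ∏ j ∈ Finset.range (p + 1), r j ≤ C) := by
  constructor
  · rintro ⟨h, hh, lam, hlam, C, hC⟩ r s hr hs
    obtain ⟨hrpos, hr0, hrmono, hrtop⟩ := hr
    obtain ⟨hspos, hs0, hsmono, hstop⟩ := hs
    have hr1 : ∀ j, 1 ≤ r j := fun j => hr0 ▸ hrmono (Nat.zero_le j)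
    have hs1 : ∀ j, 1 ≤ s j := fun j => hs0 ▸ hsmono (Nat.zero_le j)
    set μ : ℝ := max 1 lam⁻¹ with hμdef
    have hμ1 : (1:ℝ) ≤ μ := le_max_left _ _
    obtain ⟨Ns, hNs⟩ := Filter.eventually_atTop.mp (hstop.eventually_ge_atTop μ)
    set h' : ℝ := max 1 h with hh'def
    have hh'1 : (1:ℝ) ≤ h' := le_max_left _ _
    obtain ⟨Nr, hNr⟩ := Filter.eventually_atTop.mp (hrtop.eventually_ge_atTop h')
    have keyS : ∀ p : ℕ, lam⁻¹ ^ p ≤ μ ^ Ns * ∏ j ∈ Finset.range (p + 1), s j := fun p =>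
      le_trans (pow_le_pow_left₀ (by positivity) (le_max_right _ _) p)
        (prod_pow_le s hs1 μ hμ1 Ns (fun j hj => hNs j hj) p)
    have keyR : ∀ p : ℕ, h ^ p ≤ h' ^ Nr * ∏ j ∈ Finset.range (p + 1), r j := fun p =>
      le_trans (pow_le_pow_left₀ hh.le (le_max_right _ _) p)
        (prod_pow_le r hr1 h' hh'1 Nr (fun j hj => hNr j hj) p)
    have hcs1 : (1:ℝ) ≤ μ ^ Ns := one_le_pow₀ hμ1
    have hAbove : ∀ n : ℕ, assocFn (fun q => M q * ∏ j ∈ Finset.range (q + 1), s j) n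
        ≤ assocFn M (lam * n) + Real.log (μ ^ Ns) := by
      intro n
      have hlog0 : 0 ≤ Real.log (μ ^ Ns) := Real.log_nonneg hcs1
      rcases Nat.eq_zero_or_pos n with hn | hn
      · subst hn
        simp only [Nat.cast_zero, mul_zero]
        rw [assocFn, assocFn]
        simp only [if_pos le_rfl]
        linarith
      · have hn0 : (0:ℝ) < n := by exact_mod_cast hn
        have hln0 : 0 < lam * n := by positivity
        obtain ⟨B, hB⟩ := auxBdd M hpos hquot (lam * n) hln0
        have hbdd : BddAbove (Set.range fun p : ℕ => Real.log ((lam * n) ^ p / M p)) :=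
          ⟨B, by rintro x ⟨p, rfl⟩; exact hB p⟩
        have hA0 : 0 ≤ assocFn M (lam * n) := by
          have := le_assocFn M (lam * n) hln0 hbdd 0
          simpa [hM0] using this
        apply assocFn_le _ _ _ (by linarith)
        intro p
        have hMp := hpos p
        have hPs : (0:ℝ) < ∏ j ∈ Finset.range (p + 1), s j :=
          Finset.prod_pos (fun j _ => hspos j)
        have npow : (0:ℝ) ≤ (n:ℝ) ^ p := by positivity
        have k2 : (1:ℝ) ≤ lam ^ p * (μ ^ Ns * ∏ j ∈ Finset.range (p + 1), s j) := by
          have := mul_le_mul_of_nonneg_left (keyS p) (le_of_lt (pow_pos hlam p))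
          rw [← mul_pow, mul_inv_cancel₀ (ne_of_gt hlam), one_pow] at this
          linarith
        have step1 : (n:ℝ) ^ p / (M p * ∏ j ∈ Finset.range (p + 1), s j)
            ≤ ((lam * n) ^ p / M p) * μ ^ Ns := by
          rw [div_mul_eq_mul_div, div_le_div_iff₀ (by positivity) hMp, mul_pow]
          nlinarith [mul_le_mul_of_nonneg_left k2 (mul_nonneg npow hMp.le)]
        have step2 : Real.log ((n:ℝ) ^ p / (M p * ∏ j ∈ Finset.range (p + 1), s j))
            ≤ Real.log (((lam * n) ^ p / M p) * μ ^ Ns) :=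
          Real.log_le_log (by positivity) step1
        have step3 : Real.log (((lam * n) ^ p / M p) * μ ^ Ns)
            = Real.log ((lam * n) ^ p / M p) + Real.log (μ ^ Ns) :=
          Real.log_mul (by positivity) (by positivity)
        have step4 := le_assocFn M (lam * n) hln0 hbdd p
        calc Real.log ((n:ℝ) ^ p / (M p * ∏ j ∈ Finset.range (p + 1), s j)) ≤ _ := step2
          _ = _ := step3
          _ ≤ assocFn M (lam * n) + Real.log (μ ^ Ns) := by linarith
    have hC0 : 0 < C :=
      lt_of_lt_of_le (div_pos (mul_pos (ha 0 0) (Real.exp_pos _)) (pow_pos hh 0)) (hC 0 0)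
    refine ⟨C * (μ ^ Ns * h' ^ Nr), ?_⟩
    intro p n
    have hPr : (0:ℝ) < ∏ j ∈ Finset.range (p + 1), r j :=
      Finset.prod_pos (fun j _ => hrpos j)
    have e1 : Real.exp (assocFn (fun q => M q * ∏ j ∈ Finset.range (q + 1), s j) n)
        ≤ Real.exp (assocFn M (lam * n)) * μ ^ Ns := by
      rw [← Real.exp_log (show (0:ℝ) < μ ^ Ns by positivity), ← Real.exp_add]
      exact Real.exp_le_exp.mpr (hAbove n)
    have e2 := keyR p
    rw [div_le_iff₀ hPr]
    have hCp := hC p n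
    rw [div_le_iff₀ (pow_pos hh p)] at hCp
    calc a p n * Real.exp (assocFn (fun q => M q * ∏ j ∈ Finset.range (q + 1), s j) n)
        ≤ a p n * (Real.exp (assocFn M (lam * n)) * μ ^ Ns) :=
          mul_le_mul_of_nonneg_left e1 (ha p n).le
      _ = (a p n * Real.exp (assocFn M (lam * n))) * μ ^ Ns := by ring
      _ ≤ (C * h ^ p) * μ ^ Ns := mul_le_mul_of_nonneg_right hCp (by positivity)
      _ ≤ (C * (h' ^ Nr * ∏ j ∈ Finset.range (p + 1), r j)) * μ ^ Ns := by
          have := mul_le_mul_of_nonneg_left e2 hC0.le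
          nlinarith [pow_pos (lt_of_lt_of_le one_pos hμ1) Ns]
      _ = C * (μ ^ Ns * h' ^ Nr) * ∏ j ∈ Finset.range (p + 1), r j := by ring
  · intro hRHS
    by_contra hL
    push_neg at hL
    have HH : ∀ k : ℕ, ∃ p n q : ℕ,
        Real.exp 1 * ((k:ℝ) + 2) ^ 4 * ((k:ℝ) + 2) ^ p
          < a p n * Real.exp (assocFn M (((k:ℝ) + 2)⁻¹ * n)) ∧
        assocFn M (((k:ℝ) + 2)⁻¹ * n) ≤ Real.log ((((k:ℝ) + 2)⁻¹ * n) ^ q / M q) + 1 := by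
      intro k
      have hK : (0:ℝ) < (k:ℝ) + 2 := by positivity
      obtain ⟨p, n, hpn⟩ := hL ((k:ℝ) + 2) hK (((k:ℝ) + 2)⁻¹) (by positivity)
        (Real.exp 1 * ((k:ℝ) + 2) ^ 4)
      rw [lt_div_iff₀ (pow_pos hK p)] at hpn
      rcases Nat.eq_zero_or_pos n with hn | hn
      · refine ⟨p, n, 0, hpn, ?_⟩
        subst hn
        norm_num [assocFn, hM0]
      · have hncast : (0:ℝ) < (n:ℝ) := by exact_mod_cast hn
        have hn0 : (0:ℝ) < ((k:ℝ) + 2)⁻¹ * n := by positivity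
        have hlt : assocFn M (((k:ℝ) + 2)⁻¹ * n) - 1
            < ⨆ q : ℕ, Real.log ((((k:ℝ) + 2)⁻¹ * n) ^ q / M q) := by
          rw [← assocFn_of_pos M _ hn0]; linarith
        obtain ⟨q, hq⟩ := exists_lt_of_lt_ciSup hlt
        exact ⟨p, n, q, hpn, by linarith⟩
    choose pp nn qq hh1 hh2 using HH
    set Q : ℕ → ℕ := fun k => (Finset.range (k + 1)).sup (fun i => max (pp i) (qq i)) with hQdef
    have Qmono : Monotone Q := fun i j hij =>
      Finset.sup_mono (Finset.range_subset_range.mpr (by omega))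
    have hQQ : ∀ k, max (pp k) (qq k) ≤ Q k := fun k =>
      Finset.le_sup (f := fun i => max (pp i) (qq i)) (Finset.self_mem_range_succ k)
    have hpQ : ∀ k, pp k ≤ Q k := fun k => le_trans (le_max_left _ _) (hQQ k)
    have hqQ : ∀ k, qq k ≤ Q k := fun k => le_trans (le_max_right _ _) (hQQ k)
    set f : ℕ → ℕ := fun j => 1 + ((Finset.range j).filter (fun i => Q i < j)).card with hfdef
    have f0 : f 0 = 1 := by simp [hfdef]
    have f1 : ∀ j, 1 ≤ f j := fun j => Nat.le_add_right 1 _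
    have fmono : Monotone f := by
      intro i j hij
      simp only [hfdef]
      apply Nat.add_le_add_left
      apply Finset.card_le_card
      intro x hx
      simp only [Finset.mem_filter, Finset.mem_range] at hx ⊢
      omega
    have fub : ∀ k j, j ≤ Q k → f j ≤ k + 2 := by
      intro k j hj
      have hsub : (Finset.range j).filter (fun i => Q i < j) ⊆ Finset.range (k + 1) := by
        intro x hx
        simp only [Finset.mem_filter, Finset.mem_range] at hx ⊢
        by_contra hxk
        push_neg at hxk
        have := Qmono (show k ≤ x by omega)
        omega
      have hcard := Finset.card_le_card hsub
      rw [Finset.card_range] at hcard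
      simp only [hfdef]
      omega
    have ftopN : Tendsto f atTop atTop := by
      apply Filter.tendsto_atTop_atTop.mpr
      intro b
      refine ⟨Q b + b + 1, fun j hj => ?_⟩
      have hsub : Finset.range (b + 1) ⊆ (Finset.range j).filter (fun i => Q i < j) := by
        intro x hx
        simp only [Finset.mem_filter, Finset.mem_range] at hx ⊢
        have := Qmono (show x ≤ b by omega)
        omega
      have hcard := Finset.card_le_card hsub
      rw [Finset.card_range] at hcard
      simp only [hfdef]
      omega
    set rr : ℕ → ℝ := fun j => ((f j : ℕ) : ℝ) with hrrdef
    have hrr1 : ∀ j, (1:ℝ) ≤ rr j := fun j => by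
      simp only [hrrdef]; exact_mod_cast f1 j
    have hrrIs : IsRSeq rr := by
      refine ⟨fun j => lt_of_lt_of_le one_pos (hrr1 j), by simp [hrrdef, f0],
        fun i j hij => ?_, tendsto_natCast_atTop_atTop.comp ftopN⟩
      simp only [hrrdef]; exact_mod_cast fmono hij
    obtain ⟨C, hC⟩ := hRHS rr rr hrrIs hrrIs
    have hC0 : 0 ≤ C := by
      refine le_trans (le_of_lt ?_) (hC 0 0)
      exact div_pos (mul_pos (ha 0 0) (Real.exp_pos _))
        (Finset.prod_pos fun j _ => lt_of_lt_of_le one_pos (hrr1 j))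
    have main : ∀ k : ℕ, ((k:ℝ) + 2) ^ 2 < C := by
      intro k
      have hK0 : (0:ℝ) < (k:ℝ) + 2 := by positivity
      have hK1 : (1:ℝ) ≤ (k:ℝ) + 2 := by
        have : (0:ℝ) ≤ (k:ℝ) := Nat.cast_nonneg k
        linarith
      have hlogK : 0 ≤ Real.log ((k:ℝ) + 2) := Real.log_nonneg hK1
      have hrrK : ∀ j, j ≤ Q k → rr j ≤ (k:ℝ) + 2 := by
        intro j hj
        have h1 := fub k j hj
        have h2 : ((f j : ℕ):ℝ) ≤ ((k + 2 : ℕ):ℝ) := Nat.cast_le.mpr h1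
        push_cast at h2
        simpa [hrrdef] using h2
      have hrr0 : ∀ j, (0:ℝ) ≤ rr j := fun j => le_trans zero_le_one (hrr1 j)
      have hPany : ∀ m : ℕ, (0:ℝ) < ∏ j ∈ Finset.range (m + 1), rr j := fun m =>
        Finset.prod_pos fun j _ => lt_of_lt_of_le one_pos (hrr1 j)
      have hPr : ∏ j ∈ Finset.range (pp k + 1), rr j ≤ ((k:ℝ) + 2) ^ (pp k + 1) :=
        prod_le_pow rr hrr0 _ (pp k) (fun j hj => hrrK j (le_trans hj (hpQ k)))
      have hPs : ∏ j ∈ Finset.range (qq k + 1), rr j ≤ ((k:ℝ) + 2) ^ (qq k + 1) :=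
        prod_le_pow rr hrr0 _ (qq k) (fun j hj => hrrK j (le_trans hj (hqQ k)))
      have G2 : assocFn M (((k:ℝ) + 2)⁻¹ * nn k)
          ≤ assocFn (fun q => M q * ∏ j ∈ Finset.range (q + 1), rr j) (nn k)
            + (1 + Real.log ((k:ℝ) + 2)) := by
        rcases Nat.eq_zero_or_pos (nn k) with hN | hN
        · rw [hN]
          norm_num [assocFn]
          linarith
        · have hN0 : (0:ℝ) < (nn k : ℝ) := by exact_mod_cast hN
          have hKN0 : (0:ℝ) < ((k:ℝ) + 2)⁻¹ * nn k := by positivity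
          obtain ⟨B, hB⟩ := auxBdd M hpos hquot (nn k : ℝ) hN0
          have hbdd' : BddAbove (Set.range fun q : ℕ =>
              Real.log ((nn k : ℝ) ^ q / (M q * ∏ j ∈ Finset.range (q + 1), rr j))) := by
            refine ⟨B, ?_⟩
            rintro x ⟨q, rfl⟩
            have h1q : (1:ℝ) ≤ ∏ j ∈ Finset.range (q + 1), rr j := by
              calc (1:ℝ) = ∏ j ∈ Finset.range (q + 1), 1 := by simp
                _ ≤ ∏ j ∈ Finset.range (q + 1), rr j :=
                  Finset.prod_le_prod (fun j _ => zero_le_one) (fun j _ => hrr1 j)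
            have hle : (nn k : ℝ) ^ q / (M q * ∏ j ∈ Finset.range (q + 1), rr j)
                ≤ (nn k : ℝ) ^ q / M q := by
              apply div_le_div_of_nonneg_left (by positivity) (hpos q)
              nlinarith [hpos q, h1q]
            calc Real.log ((nn k : ℝ) ^ q / (M q * ∏ j ∈ Finset.range (q + 1), rr j))
                ≤ Real.log ((nn k : ℝ) ^ q / M q) :=
                  Real.log_le_log (div_pos (pow_pos hN0 q) (mul_pos (hpos q) (hPany q))) hle
              _ ≤ B := hB q
          have hPq0 : (0:ℝ) < ∏ j ∈ Finset.range (qq k + 1), rr j :=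
            Finset.prod_pos fun j _ => lt_of_lt_of_le one_pos (hrr1 j)
          have hineq : (((k:ℝ) + 2)⁻¹ * nn k) ^ (qq k) / M (qq k)
              ≤ ((nn k : ℝ) ^ (qq k) / (M (qq k) * ∏ j ∈ Finset.range (qq k + 1), rr j))
                * ((k:ℝ) + 2) := by
            rw [mul_pow, div_mul_eq_mul_div,
              div_le_div_iff₀ (hpos (qq k)) (mul_pos (hpos (qq k)) hPq0)]
            have e2 : (((k:ℝ) + 2)⁻¹) ^ (qq k) * ∏ j ∈ Finset.range (qq k + 1), rr j
                ≤ (k:ℝ) + 2 := by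
              calc (((k:ℝ) + 2)⁻¹) ^ (qq k) * ∏ j ∈ Finset.range (qq k + 1), rr j
                  ≤ (((k:ℝ) + 2)⁻¹) ^ (qq k) * ((k:ℝ) + 2) ^ (qq k + 1) :=
                    mul_le_mul_of_nonneg_left hPs (by positivity)
                _ = (k:ℝ) + 2 := by
                    rw [pow_succ, ← mul_assoc, ← mul_pow, inv_mul_cancel₀ (ne_of_gt hK0)]
                    simp
            nlinarith [pow_nonneg hN0.le (qq k), hpos (qq k),
              mul_le_mul_of_nonneg_left e2 (mul_nonneg (pow_nonneg hN0.le (qq k)) (hpos (qq k)).le)]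
          have hstep : Real.log ((((k:ℝ) + 2)⁻¹ * nn k) ^ (qq k) / M (qq k))
              ≤ Real.log ((nn k : ℝ) ^ (qq k) / (M (qq k) * ∏ j ∈ Finset.range (qq k + 1), rr j))
                + Real.log ((k:ℝ) + 2) := by
            rw [← Real.log_mul
              (ne_of_gt (div_pos (pow_pos hN0 _) (mul_pos (hpos _) hPq0))) (ne_of_gt hK0)]
            exact Real.log_le_log (div_pos (pow_pos hKN0 _) (hpos _)) hineq
          have hfin := le_assocFn (fun q => M q * ∏ j ∈ Finset.range (q + 1), rr j)
            (nn k : ℝ) hN0 hbdd' (qq k)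
          have hq2 := hh2 k
          linarith
      have hPr0 : (0:ℝ) < ∏ j ∈ Finset.range (pp k + 1), rr j :=
        Finset.prod_pos fun j _ => lt_of_lt_of_le one_pos (hrr1 j)
      have F3 := hC (pp k) (nn k)
      rw [div_le_iff₀ hPr0] at F3
      have expo : Real.exp (assocFn M (((k:ℝ) + 2)⁻¹ * nn k))
          ≤ Real.exp (assocFn (fun q => M q * ∏ j ∈ Finset.range (q + 1), rr j) (nn k))
            * (Real.exp 1 * ((k:ℝ) + 2)) := by
        have h := Real.exp_le_exp.mpr G2
        rwa [Real.exp_add, Real.exp_add, Real.exp_log hK0] at h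
      have chain : Real.exp 1 * ((k:ℝ) + 2) ^ 4 * ((k:ℝ) + 2) ^ (pp k)
          < C * ((k:ℝ) + 2) ^ (pp k + 1) * (Real.exp 1 * ((k:ℝ) + 2)) := by
        calc Real.exp 1 * ((k:ℝ) + 2) ^ 4 * ((k:ℝ) + 2) ^ (pp k)
            < a (pp k) (nn k) * Real.exp (assocFn M (((k:ℝ) + 2)⁻¹ * nn k)) := hh1 k
          _ ≤ a (pp k) (nn k)
              * (Real.exp (assocFn (fun q => M q * ∏ j ∈ Finset.range (q + 1), rr j) (nn k))
                * (Real.exp 1 * ((k:ℝ) + 2))) :=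
              mul_le_mul_of_nonneg_left expo (ha _ _).le
          _ = (a (pp k) (nn k)
              * Real.exp (assocFn (fun q => M q * ∏ j ∈ Finset.range (q + 1), rr j) (nn k)))
                * (Real.exp 1 * ((k:ℝ) + 2)) := by ring
          _ ≤ (C * ∏ j ∈ Finset.range (pp k + 1), rr j) * (Real.exp 1 * ((k:ℝ) + 2)) :=
              mul_le_mul_of_nonneg_right F3 (by positivity)
          _ ≤ (C * ((k:ℝ) + 2) ^ (pp k + 1)) * (Real.exp 1 * ((k:ℝ) + 2)) :=
              mul_le_mul_of_nonneg_right
                (mul_le_mul_of_nonneg_left hPr hC0) (by positivity)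
      have hpow : (0:ℝ) < Real.exp 1 * ((k:ℝ) + 2) ^ (pp k + 2) := by positivity
      have e1 : Real.exp 1 * ((k:ℝ) + 2) ^ 4 * ((k:ℝ) + 2) ^ (pp k)
          = ((k:ℝ) + 2) ^ 2 * (Real.exp 1 * ((k:ℝ) + 2) ^ (pp k + 2)) := by ring
      have e2 : C * ((k:ℝ) + 2) ^ (pp k + 1) * (Real.exp 1 * ((k:ℝ) + 2))
          = C * (Real.exp 1 * ((k:ℝ) + 2) ^ (pp k + 2)) := by ring
      rw [e1, e2] at chain
      exact (mul_lt_mul_iff_left₀ hpow).mp chain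
    have hmain := main ⌈C⌉₊
    have hceil : C ≤ (⌈C⌉₊ : ℝ) := Nat.le_ceil C
    nlinarith [Nat.cast_nonneg (α := ℝ) ⌈C⌉₊]
end

section
/- Let (χ_n) be an analytic cut-off sequence supported in a relatively compact open set Ω ⊂ ℝ^d (i.e., 0 ≤ χ_n ≤ 1, bounded in D(Ω), and ‖χ_n^{(α)}‖_{L^∞} ≤ L (Ln)^{|α|} for |α| ≤ n). Suppose p^p ≤ C k^p M_p for all p. Then for every φ in the Banach space E^{M_p,h}(Ω̄) (sup_α sup_{x∈Ω̄} |φ^{(α)}(x)|/(h^{|α|}M_{|α|}) < ∞), one has |ξ|^n |F(χ_n φ)(ξ)| ≤ C L |Ω| ‖φ‖_{Ω̄,h} (√d (h + L k))^n M_n for all n ∈ ℕ and ξ ∈ ℝ^d. -/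
open MeasureTheory Set

/-- Multi-index derivatives (coordinate tuples), complex-valued version. -/
noncomputable def coordDeriv (d k : ℕ) (f : EuclideanSpace ℝ (Fin d) → ℂ)
    (js : Fin k → Fin d) (x : EuclideanSpace ℝ (Fin d)) : ℝ :=
  ‖iteratedFDeriv ℝ k f x (fun i => EuclideanSpace.single (js i) (1 : ℝ))‖

/-- Multi-index derivatives (coordinate tuples), real-valued version. -/
noncomputable def coordDerivR (d k : ℕ) (f : EuclideanSpace ℝ (Fin d) → ℝ)
    (js : Fin k → Fin d) (x : EuclideanSpace ℝ (Fin d)) : ℝ :=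
  ‖iteratedFDeriv ℝ k f x (fun i => EuclideanSpace.single (js i) (1 : ℝ))‖

/-- Fourier transform with the convention `φ̂(ξ) = ∫ φ(x) e^{-i x·ξ} dx`. -/
noncomputable def FT (d : ℕ) (φ : EuclideanSpace ℝ (Fin d) → ℂ)
    (ξ : EuclideanSpace ℝ (Fin d)) : ℂ :=
  ∫ x : EuclideanSpace ℝ (Fin d),
    Complex.exp (-Complex.I * ((inner ℝ x ξ : ℝ) : ℂ)) * φ x

section Arith
variable (M : ℕ → ℝ) (hpos : ∀ p, 0 < M p) (hM0 : M 0 = 1)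
    (hlc : ∀ p : ℕ, 1 ≤ p → (M p) ^ 2 ≤ M (p - 1) * M (p + 1))

include hpos hM0 hlc in
lemma logconv_pow : ∀ j n : ℕ, j ≤ n → M j ^ n ≤ M n ^ j := by
  set a : ℕ → ℝ := fun p => Real.log (M p) with ha
  have hdelta : Monotone (fun p => a (p + 1) - a p) := by
    apply monotone_nat_of_le_succ
    intro p
    have h2 := hlc (p + 1) (by omega)
    simp only [Nat.add_sub_cancel] at h2
    have hlog : 2 * a (p + 1) ≤ a p + a (p + 2) := by
      have := Real.log_le_log (pow_pos (hpos _) 2) h2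
      rw [Real.log_pow, Real.log_mul (ne_of_gt (hpos p)) (ne_of_gt (hpos (p + 2)))] at this
      push_cast at this; linarith
    linarith
  have ha0 : a 0 = 0 := by simp [ha, hM0]
  have hsum : ∀ j : ℕ, a j = ∑ p ∈ Finset.range j, (a (p + 1) - a p) := by
    intro j; rw [Finset.sum_range_sub a j, ha0, sub_zero]
  have key : ∀ j n : ℕ, j ≤ n → (n : ℝ) * a j ≤ (j : ℝ) * a n := by
    intro j n hjn
    induction n, hjn using Nat.le_induction with
    | base => ring_nf; exact le_refl _
    | succ n hjn ih =>
      have hstep : a j ≤ (j : ℝ) * (a (n + 1) - a n) := by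
        rw [hsum j]
        calc ∑ p ∈ Finset.range j, (a (p + 1) - a p)
            ≤ ∑ _p ∈ Finset.range j, (a (n + 1) - a n) := by
              apply Finset.sum_le_sum
              intro p hp
              exact hdelta (by simp at hp; omega)
          _ = (j : ℝ) * (a (n + 1) - a n) := by
              rw [Finset.sum_const, Finset.card_range]; ring
      push_cast
      nlinarith [hpos j, hpos n]
  intro j n hjn
  have := key j n hjn
  have h1 : Real.log (M j ^ n) ≤ Real.log (M n ^ j) := by
    rw [Real.log_pow, Real.log_pow]; exact this
  exact (Real.log_le_log_iff (pow_pos (hpos _) _) (pow_pos (hpos _) _)).mp h1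

variable (C k : ℝ) (hC : 0 < C) (hk : 0 < k) (hCk : ∀ p : ℕ, (p : ℝ) ^ p ≤ C * k ^ p * M p)

include hCk hM0 in
lemma one_le_C : 1 ≤ C := by have := hCk 0; simpa [hM0] using this

include hpos hM0 hlc hC hk hCk in
lemma key_term : ∀ n m : ℕ, 1 ≤ n → m ≤ n → (n : ℝ) ^ m * M (n - m) ≤ C * k ^ m * M n := by
  intro n m hn hm
  have hC1 : 1 ≤ C := one_le_C M hM0 C k hCk
  have hA : (0 : ℝ) ≤ (n : ℝ) ^ m * M (n - m) := mul_nonneg (by positivity) (hpos _).le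
  have hB : (0 : ℝ) ≤ C * k ^ m * M n := mul_nonneg (mul_nonneg hC.le (by positivity)) (hpos _).le
  refine le_of_pow_le_pow_left₀ (n := n) (by omega) hB ?_
  have e1 : ((n : ℝ) ^ m * M (n - m)) ^ n = ((n : ℝ) ^ n) ^ m * (M (n - m)) ^ n := by
    rw [mul_pow, ← pow_mul, ← pow_mul, Nat.mul_comm]
  have e2 : (C * k ^ m * M n) ^ n = C ^ n * (k ^ n) ^ m * (M n) ^ n := by
    rw [mul_pow, mul_pow, ← pow_mul, ← pow_mul, Nat.mul_comm]
  rw [e1, e2]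
  have h1 : ((n : ℝ) ^ n) ^ m ≤ (C * k ^ n * M n) ^ m :=
    pow_le_pow_left₀ (by positivity) (hCk n) m
  have h2 : (M (n - m)) ^ n ≤ (M n) ^ (n - m) :=
    logconv_pow M hpos hM0 hlc (n - m) n (by omega)
  calc ((n : ℝ) ^ n) ^ m * (M (n - m)) ^ n
      ≤ (C * k ^ n * M n) ^ m * (M n) ^ (n - m) := by
        exact mul_le_mul h1 h2 (pow_nonneg (hpos _).le n) (pow_nonneg (mul_nonneg (mul_nonneg hC.le (by positivity)) (hpos _).le) m)
    _ = C ^ m * (k ^ n) ^ m * ((M n) ^ m * (M n) ^ (n - m)) := by ring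
    _ = C ^ m * (k ^ n) ^ m * (M n) ^ n := by
        rw [← pow_add]; congr 2; omega
    _ ≤ C ^ n * (k ^ n) ^ m * (M n) ^ n := by
        have hCC : C ^ m ≤ C ^ n := pow_le_pow_right₀ hC1 hm
        have h3 : (0:ℝ) ≤ (k ^ n) ^ m := by positivity
        have h4 : (0:ℝ) ≤ (M n) ^ n := pow_nonneg (hpos _).le n
        exact mul_le_mul_of_nonneg_right (mul_le_mul_of_nonneg_right hCC h3) h4
    _ = C ^ n * (k ^ n) ^ m * (M n) ^ n := rfl
end Arith

noncomputable def dop {E F : Type*} [NormedAddCommGroup E] [NormedSpace ℝ E]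
    [NormedAddCommGroup F] [NormedSpace ℝ F] (v : E) (f : E → F) : E → F :=
  fun x => fderiv ℝ f x v

section Dop
variable {E F : Type*} [NormedAddCommGroup E] [NormedSpace ℝ E]
    [NormedAddCommGroup F] [NormedSpace ℝ F] {v : E} {f : E → F} {s : Set E}

lemma top_add_one : ((⊤ : ℕ∞) : WithTop ℕ∞) + 1 ≤ ((⊤ : ℕ∞) : WithTop ℕ∞) := by
  norm_cast

lemma contDiff_dop (hf : ContDiff ℝ (⊤ : ℕ∞) f) : ContDiff ℝ (⊤ : ℕ∞) (dop v f) :=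
  (hf.fderiv_right top_add_one).clm_apply contDiff_const

lemma contDiff_dop_iterate (hf : ContDiff ℝ (⊤ : ℕ∞) f) (m : ℕ) :
    ContDiff ℝ (⊤ : ℕ∞) ((dop v)^[m] f) := by
  induction m generalizing f with
  | zero => exact hf
  | succ m ih => rw [Function.iterate_succ_apply]; exact ih (contDiff_dop hf)

lemma contDiffOn_dop (hs : IsOpen s) (hf : ContDiffOn ℝ (⊤ : ℕ∞) f s) :
    ContDiffOn ℝ (⊤ : ℕ∞) (dop v f) s :=
  (hf.fderiv_of_isOpen hs top_add_one).clm_apply contDiffOn_const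

lemma contDiffOn_dop_iterate (hs : IsOpen s) (hf : ContDiffOn ℝ (⊤ : ℕ∞) f s) (m : ℕ) :
    ContDiffOn ℝ (⊤ : ℕ∞) ((dop v)^[m] f) s := by
  induction m generalizing f with
  | zero => exact hf
  | succ m ih => rw [Function.iterate_succ_apply]; exact ih (contDiffOn_dop hs hf)

lemma tsupport_dop_subset : tsupport (dop v f) ⊆ tsupport f := by
  apply closure_minimal _ (isClosed_tsupport f)
  intro x hx
  have h1 : x ∈ Function.support (fderiv ℝ f) := by
    intro h0
    apply hx
    show fderiv ℝ f x v = 0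
    rw [h0]; rfl
  exact support_fderiv_subset ℝ h1

lemma tsupport_dop_iterate_subset (m : ℕ) : tsupport ((dop v)^[m] f) ⊆ tsupport f := by
  induction m generalizing f with
  | zero => exact le_refl _
  | succ m ih =>
    rw [Function.iterate_succ_apply]
    exact (ih (f := dop v f)).trans tsupport_dop_subset

end Dop

section Tuple
variable {E F : Type*} [NormedAddCommGroup E] [NormedSpace ℝ E]
    [NormedAddCommGroup F] [NormedSpace ℝ F] {v : E} {s : Set E}

lemma iteratedFDerivWithin_const_dir (hs : IsOpen s) :
    ∀ (p : ℕ) (f : E → F), ContDiffOn ℝ (⊤ : ℕ∞) f s → ∀ x ∈ s,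
      iteratedFDerivWithin ℝ p f s x (fun _ => v) = (dop v)^[p] f x := by
  intro p
  induction p with
  | zero => intro f hf x hx; simp
  | succ p ih =>
    intro f hf x hx
    have hu : UniqueDiffOn ℝ s := hs.uniqueDiffOn
    have h1 : iteratedFDerivWithin ℝ (p + 1) f s x (fun _ => v) =
        iteratedFDerivWithin ℝ p (fun y => fderivWithin ℝ f s y) s x (fun _ => v) v := by
      rw [iteratedFDerivWithin_succ_apply_right hu hx]
      rfl
    have hc : ContDiffOn ℝ (⊤ : ℕ∞) (fderivWithin ℝ f s) s := hf.fderivWithin hu top_add_one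
    have h2 : iteratedFDerivWithin ℝ p (fun y => fderivWithin ℝ f s y v) s x (fun _ => v) =
        iteratedFDerivWithin ℝ p (fun y => fderivWithin ℝ f s y) s x (fun _ => v) v :=
      iteratedFDerivWithin_clm_apply_const_apply hu hc (by exact_mod_cast le_top) hx
    have h3 : iteratedFDerivWithin ℝ p (fun y => fderivWithin ℝ f s y v) s x =
        iteratedFDerivWithin ℝ p (dop v f) s x := by
      apply iteratedFDerivWithin_congr _ hx
      intro y hy
      show fderivWithin ℝ f s y v = fderiv ℝ f y v
      rw [fderivWithin_of_isOpen hs hy]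
    rw [h1, ← h2, h3, ih (dop v f) (contDiffOn_dop hs hf) x hx, ← Function.iterate_succ_apply]

lemma iteratedFDeriv_const_dir (p : ℕ) (f : E → F) (hf : ContDiff ℝ (⊤ : ℕ∞) f) (x : E) :
    iteratedFDeriv ℝ p f x (fun _ => v) = (dop v)^[p] f x := by
  rw [← iteratedFDerivWithin_univ]
  exact iteratedFDerivWithin_const_dir isOpen_univ p f hf.contDiffOn x (mem_univ x)

lemma dop_iterate_ofReal (p : ℕ) (f : E → ℝ) (hf : ContDiff ℝ (⊤ : ℕ∞) f) (x : E) :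
    (dop v)^[p] (fun y => (f y : ℂ)) x = (((dop v)^[p] f x : ℝ) : ℂ) := by
  have hfc : ContDiff ℝ (⊤ : ℕ∞) (fun y => (f y : ℂ)) :=
    Complex.ofRealCLM.contDiff.comp hf
  rw [← iteratedFDeriv_const_dir p _ hfc x, ← iteratedFDeriv_const_dir p f hf x]
  have : (fun y => (f y : ℂ)) = Complex.ofRealCLM ∘ f := rfl
  rw [this, Complex.ofRealCLM.iteratedFDeriv_comp_left hf.contDiffAt (by exact_mod_cast le_top)]
  rfl

end Tuple

section Leibniz
variable {E : Type*} [NormedAddCommGroup E] [NormedSpace ℝ E] {v : E} {s : Set E}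

lemma dop_iterate_mul (hs : IsOpen s) (f g : E → ℂ) (hf : ContDiff ℝ (⊤ : ℕ∞) f)
    (hg : ContDiffOn ℝ (⊤ : ℕ∞) g s) (n : ℕ) : ∀ x ∈ s,
    (dop v)^[n] (fun y => f y * g y) x =
      ∑ m ∈ Finset.range (n + 1),
        (n.choose m : ℂ) * ((dop v)^[m] f x) * ((dop v)^[n - m] g x) := by
  have hFd : ∀ (m : ℕ) (y : E), DifferentiableAt ℝ ((dop v)^[m] f) y := fun m y =>
    ((contDiff_dop_iterate hf m).differentiable (by simp)).differentiableAt
  have hGd : ∀ (l : ℕ), ∀ y ∈ s, DifferentiableAt ℝ ((dop v)^[l] g) y := fun l y hy =>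
    (((contDiffOn_dop_iterate hs hg l).contDiffAt (hs.mem_nhds hy)).differentiableAt
      (by simp))
  induction n with
  | zero => intro x hx; simp
  | succ n ih =>
    intro x hx
    rw [Function.iterate_succ_apply']
    have heq : (dop v)^[n] (fun y => f y * g y) =ᶠ[nhds x]
        (fun y => ∑ m ∈ Finset.range (n + 1),
          (n.choose m : ℂ) * ((dop v)^[m] f y) * ((dop v)^[n - m] g y)) := by
      filter_upwards [hs.mem_nhds hx] with y hy using ih y hy
    have hterm : ∀ m ∈ Finset.range (n + 1), DifferentiableAt ℝ
        (fun y => (n.choose m : ℂ) * ((dop v)^[m] f y) * ((dop v)^[n - m] g y)) x :=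
      fun m _ => (((hFd m x).const_mul _).mul (hGd (n - m) x hx))
    have hstep : dop v ((dop v)^[n] (fun y => f y * g y)) x =
        ∑ m ∈ Finset.range (n + 1), (n.choose m : ℂ) *
          (((dop v)^[m] f x) * ((dop v)^[n - m + 1] g x) +
            ((dop v)^[m + 1] f x) * ((dop v)^[n - m] g x)) := by
      show fderiv ℝ ((dop v)^[n] (fun y => f y * g y)) x v = _
      rw [heq.fderiv_eq, fderiv_fun_sum hterm]
      rw [ContinuousLinearMap.sum_apply]
      apply Finset.sum_congr rfl
      intro m _
      have e1 : (fun y => (n.choose m : ℂ) * ((dop v)^[m] f y) * ((dop v)^[n - m] g y)) =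
          (fun y => (n.choose m : ℂ) * (((dop v)^[m] f y) * ((dop v)^[n - m] g y))) := by
        funext y; ring
      rw [e1, fderiv_const_mul (a := fun y => ((dop v)^[m] f y) * ((dop v)^[n - m] g y)) ((hFd m x).mul (hGd (n - m) x hx)),
        fderiv_fun_mul (hFd m x) (hGd (n - m) x hx)]
      simp only [ContinuousLinearMap.smul_apply, ContinuousLinearMap.add_apply,
        ContinuousLinearMap.coe_smul', Pi.smul_apply, smul_eq_mul]
      rw [Function.iterate_succ_apply', Function.iterate_succ_apply']
      simp only [dop]
      ring
    rw [hstep]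
    have hrw : ∀ m ∈ Finset.range (n + 1), n - m + 1 = n + 1 - m := by
      intro m hm; simp at hm; omega
    rw [Finset.sum_congr rfl (fun m hm => by rw [hrw m hm])]
    simp only [mul_assoc]
    rw [show n + 1 + 1 = n + 2 from rfl,
      Finset.sum_choose_succ_mul (R := ℂ) (fun i j => ((dop v)^[i] f x) * ((dop v)^[j] g x)) n,
      ← Finset.sum_add_distrib]
    apply Finset.sum_congr rfl
    intro m _
    ring

section Fourier
variable {d : ℕ}

local notation "E" => EuclideanSpace ℝ (Fin d)

lemma FT_dop (j : Fin d) (ξ : E) (g : E → ℂ) (hg : ContDiff ℝ (⊤ : ℕ∞) g)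
    (hsupp : HasCompactSupport g) :
    FT d (dop (EuclideanSpace.single j (1 : ℝ)) g) ξ
      = (Complex.I * ((ξ j : ℝ) : ℂ)) * FT d g ξ := by
  set v : E := EuclideanSpace.single j (1 : ℝ) with hv
  set e : E → ℂ := fun x => Complex.exp (-Complex.I * ((inner ℝ x ξ : ℝ) : ℂ)) with he
  set B : E →L[ℝ] ℂ := (-Complex.I) • (Complex.ofRealCLM.comp (innerSL ℝ ξ)) with hB
  have hBv : B v = -Complex.I * ((ξ j : ℝ) : ℂ) := by
    simp only [hB, ContinuousLinearMap.smul_apply, ContinuousLinearMap.comp_apply,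
      Complex.ofRealCLM_apply, innerSL_apply_apply, hv]
    rw [real_inner_comm, EuclideanSpace.inner_single_left]
    simp
  have hu : ∀ x : E, HasFDerivAt (fun y : E => -Complex.I * ((inner ℝ y ξ : ℝ) : ℂ)) B x := by
    intro x
    have : (fun y : E => -Complex.I * ((inner ℝ y ξ : ℝ) : ℂ)) = fun y => B y := by
      funext y
      simp only [hB, ContinuousLinearMap.smul_apply, ContinuousLinearMap.comp_apply,
        Complex.ofRealCLM_apply, innerSL_apply_apply, real_inner_comm, smul_eq_mul]
    rw [this]
    exact B.hasFDerivAt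
  have he_fderiv : ∀ x : E, HasFDerivAt e (e x • B) x := fun x => (hu x).cexp
  have he_diff : Differentiable ℝ e := fun x => (he_fderiv x).differentiableAt
  have he_deriv : ∀ x : E, fderiv ℝ e x v = -Complex.I * ((ξ j : ℝ) : ℂ) * e x := by
    intro x
    rw [(he_fderiv x).fderiv]
    simp only [ContinuousLinearMap.smul_apply, smul_eq_mul, hBv]
    ring
  have hgd : Differentiable ℝ g := hg.differentiable (by simp)
  have he_cont : Continuous e := by
    apply Complex.continuous_exp.comp
    have h1 : Continuous fun x : E => (inner ℝ x ξ : ℝ) := continuous_id.inner continuous_const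
    exact continuous_const.mul (Complex.continuous_ofReal.comp h1)
  have heg_int : Integrable (fun x : E => e x * g x) := by
    apply Continuous.integrable_of_hasCompactSupport
    · exact he_cont.mul hg.continuous
    · exact hsupp.mul_left
  have hf'g_int : Integrable (fun x : E => fderiv ℝ e x v * g x) := by
    have : (fun x : E => fderiv ℝ e x v * g x)
        = fun x => (-Complex.I * ((ξ j : ℝ) : ℂ)) * (e x * g x) := by
      funext x; rw [he_deriv x]; ring
    rw [this]
    exact heg_int.const_mul _
  have hdopg_supp : HasCompactSupport (dop v g) := hsupp.fderiv_apply ℝ v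
  have hfg'_int : Integrable (fun x : E => e x * fderiv ℝ g x v) := by
    apply Continuous.integrable_of_hasCompactSupport
    · exact he_cont.mul (contDiff_dop hg).continuous
    · exact hdopg_supp.mul_left
  have key := integral_mul_fderiv_eq_neg_fderiv_mul_of_integrable (v := v)
    hf'g_int hfg'_int heg_int (fun x _ => he_diff x) (fun x _ => hgd x)
  show ∫ x : E, e x * fderiv ℝ g x v = _
  rw [key]
  have : (fun x : E => fderiv ℝ e x v * g x)
      = fun x => (-Complex.I * ((ξ j : ℝ) : ℂ)) * (e x * g x) := by
    funext x; rw [he_deriv x]; ring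
  rw [this]
  simp only [← smul_eq_mul (α := ℂ), integral_smul]
  simp only [smul_eq_mul]
  show -((-Complex.I * ((ξ j : ℝ) : ℂ)) * FT d g ξ) = _
  ring

lemma FT_dop_iterate (j : Fin d) (ξ : E) :
    ∀ (n : ℕ) (g : E → ℂ), ContDiff ℝ (⊤ : ℕ∞) g → HasCompactSupport g →
    FT d ((dop (EuclideanSpace.single j (1 : ℝ)))^[n] g) ξ
      = (Complex.I * ((ξ j : ℝ) : ℂ)) ^ n * FT d g ξ := by
  intro n
  induction n with
  | zero => intro g _ _; simp
  | succ n ih =>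
    intro g hg hsupp
    rw [Function.iterate_succ_apply,
      ih _ (contDiff_dop hg) (hsupp.fderiv_apply ℝ _),
      FT_dop j ξ g hg hsupp, pow_succ]
    ring

end Fourier

theorem stmt8 (M : ℕ → ℝ) (hpos : ∀ p, 0 < M p) (hM0 : M 0 = 1)
    (hlc : ∀ p : ℕ, 1 ≤ p → (M p) ^ 2 ≤ M (p - 1) * M (p + 1))
    (d : ℕ) (hd : 0 < d)
    (Ω : Set (EuclideanSpace ℝ (Fin d))) (hΩ : IsOpen Ω) (hΩc : IsCompact (closure Ω))
    -- the analytic cut-off sequence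
    (χ : ℕ → EuclideanSpace ℝ (Fin d) → ℝ)
    (hχsm : ∀ n, ContDiff ℝ (⊤ : ℕ∞) (χ n))
    (hχsupp : ∀ n, tsupport (χ n) ⊆ Ω)
    (hχ01 : ∀ n x, 0 ≤ χ n x ∧ χ n x ≤ 1)
    (hχbdd : ∀ k : ℕ, ∃ B : ℝ, ∀ (n : ℕ) (js : Fin k → Fin d) x,
      coordDerivR d k (χ n) js x ≤ B)
    (L : ℝ) (hL : 1 ≤ L)
    (hχL : ∀ n : ℕ, 1 ≤ n → ∀ k : ℕ, k ≤ n → ∀ (js : Fin k → Fin d) x,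
      coordDerivR d k (χ n) js x ≤ L * (L * n) ^ k)
    -- the constants with p^p ≤ C k^p M_p
    (C k : ℝ) (hC : 0 < C) (hk : 0 < k)
    (hCk : ∀ p : ℕ, (p : ℝ) ^ p ≤ C * k ^ p * M p)
    -- the function φ ∈ E^{M_p,h}(Ω̄)
    (h : ℝ) (hh : 0 < h)
    (V : Set (EuclideanSpace ℝ (Fin d))) (hV : IsOpen V) (hΩV : closure Ω ⊆ V)
    (φ : EuclideanSpace ℝ (Fin d) → ℂ) (hφ : ContDiffOn ℝ (⊤ : ℕ∞) φ V)
    (Cφ : ℝ) (hCφ : 0 ≤ Cφ)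
    (hφb : ∀ (p : ℕ) (js : Fin p → Fin d), ∀ x ∈ closure Ω,
      ‖iteratedFDerivWithin ℝ p φ V x (fun i => EuclideanSpace.single (js i) (1 : ℝ))‖ ≤
        Cφ * h ^ p * M p) :
    ∀ n : ℕ, 1 ≤ n → ∀ ξ : EuclideanSpace ℝ (Fin d),
      ‖ξ‖ ^ n * ‖FT d (fun x => (χ n x : ℂ) * φ x) ξ‖ ≤
        C * L * (volume Ω).toReal * Cφ * (Real.sqrt d * (h + L * k)) ^ n * M n := by
  intro n hn ξ
  -- basic facts
  have hχsm' : ∀ m, ContDiff ℝ (⊤ : ℕ∞) (χ m) := fun m => (hχsm m).of_le (by simp)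
  have hφ' : ContDiffOn ℝ (⊤ : ℕ∞) φ V := hφ.of_le (by simp)
  have hΩsubV : Ω ⊆ V := (subset_closure.trans hΩV)
  -- choose the coordinate with maximal component
  have : Nonempty (Fin d) := ⟨⟨0, hd⟩⟩
  obtain ⟨j, -, hjmax⟩ := Finset.exists_max_image (Finset.univ : Finset (Fin d))
    (fun i => |ξ i|) ⟨⟨0, hd⟩, Finset.mem_univ _⟩
  set v : EuclideanSpace ℝ (Fin d) := EuclideanSpace.single j (1 : ℝ) with hv
  have hξj : ‖ξ‖ ≤ Real.sqrt d * |ξ j| := by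
    rw [EuclideanSpace.norm_eq]
    have h1 : ∑ i, ‖ξ i‖ ^ 2 ≤ (d : ℝ) * |ξ j| ^ 2 := by
      calc ∑ i, ‖ξ i‖ ^ 2 ≤ ∑ _i : Fin d, |ξ j| ^ 2 := by
            apply Finset.sum_le_sum
            intro i _
            rw [Real.norm_eq_abs]
            exact pow_le_pow_left₀ (abs_nonneg _) (hjmax i (Finset.mem_univ _)) 2
        _ = (d : ℝ) * |ξ j| ^ 2 := by rw [Finset.sum_const, Finset.card_univ, Fintype.card_fin]; ring
    calc Real.sqrt (∑ i, ‖ξ i‖ ^ 2) ≤ Real.sqrt ((d : ℝ) * |ξ j| ^ 2) := Real.sqrt_le_sqrt h1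
      _ = Real.sqrt d * |ξ j| := by
          rw [Real.sqrt_mul (by positivity), Real.sqrt_sq_eq_abs, abs_abs]
  -- the product function
  set ψ : EuclideanSpace ℝ (Fin d) → ℂ := fun x => (χ n x : ℂ) * φ x with hψ
  have hχc : ContDiff ℝ (⊤ : ℕ∞) (fun y => (χ n y : ℂ)) :=
    Complex.ofRealCLM.contDiff.comp (hχsm' n)
  have hψsupp : tsupport ψ ⊆ Ω := by
    refine (closure_minimal ?_ (isClosed_tsupport (χ n))).trans (hχsupp n)
    intro x hx
    by_contra hxn
    exact hx (by simp [hψ, image_eq_zero_of_notMem_tsupport hxn])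
  have hψsm : ContDiff ℝ (⊤ : ℕ∞) ψ := by
    rw [contDiff_iff_contDiffAt]
    intro x
    by_cases hxV : x ∈ V
    · exact hχc.contDiffAt.mul ((hφ'.contDiffAt (hV.mem_nhds hxV)))
    · have hxn : x ∉ tsupport (χ n) := fun hmem => hxV (hΩV (subset_closure ((hχsupp n) hmem)))
      have : ψ =ᶠ[nhds x] 0 := by
        filter_upwards [(isClosed_tsupport (χ n)).isOpen_compl.mem_nhds hxn] with y hy
        simp [hψ, image_eq_zero_of_notMem_tsupport hy]
      exact (contDiffAt_const (c := 0)).congr_of_eventuallyEq this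
  have hψcs : HasCompactSupport ψ :=
    hΩc.of_isClosed_subset (isClosed_tsupport ψ) (hψsupp.trans subset_closure)
  -- Fourier identity
  have hFT : ‖FT d ((dop v)^[n] ψ) ξ‖ = |ξ j| ^ n * ‖FT d ψ ξ‖ := by
    rw [FT_dop_iterate j ξ n ψ hψsm hψcs, norm_mul, norm_pow, norm_mul,
      Complex.norm_I, Complex.norm_real, Real.norm_eq_abs, one_mul]
  -- pointwise bound constant
  set Bn : ℝ := C * L * Cφ * (h + L * k) ^ n * M n with hBn
  have hBn0 : 0 ≤ Bn := by
    have := hpos n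
    have hC1 : (1:ℝ) ≤ C := one_le_C M hM0 C k hCk
    have : (0:ℝ) ≤ (h + L * k) ^ n := by positivity
    positivity
  -- support of the iterated derivative
  have hsupp_iter : ∀ x, x ∉ Ω → (dop v)^[n] ψ x = 0 := by
    intro x hx
    have : x ∉ tsupport ((dop v)^[n] ψ) := fun hmem => hx (hψsupp (tsupport_dop_iterate_subset n hmem))
    exact image_eq_zero_of_notMem_tsupport this
  -- pointwise bound on Ω
  have hpt : ∀ x ∈ Ω, ‖(dop v)^[n] ψ x‖ ≤ Bn := by
    intro x hx
    have hxV : x ∈ V := hΩsubV hx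
    rw [dop_iterate_mul hV (fun y => (χ n y : ℂ)) φ hχc hφ' n x hxV]
    have hterm : ∀ m ∈ Finset.range (n + 1),
        ‖(n.choose m : ℂ) * ((dop v)^[m] (fun y => (χ n y : ℂ)) x) * ((dop v)^[n - m] φ x)‖ ≤
          (n.choose m : ℝ) * (C * L * Cφ * ((L * k) ^ m * h ^ (n - m)) * M n) := by
      intro m hm
      have hmn : m ≤ n := by simp at hm; omega
      have hχbound : ‖(dop v)^[m] (fun y => (χ n y : ℂ)) x‖ ≤ L * (L * n) ^ m := by
        rw [dop_iterate_ofReal m (χ n) (hχsm' n) x, Complex.norm_real,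
          ← iteratedFDeriv_const_dir m (χ n) (hχsm' n) x]
        exact hχL n hn m hmn (fun _ => j) x
      have hφbound : ‖(dop v)^[n - m] φ x‖ ≤ Cφ * h ^ (n - m) * M (n - m) := by
        rw [← iteratedFDerivWithin_const_dir hV (n - m) φ hφ' x hxV]
        exact hφb (n - m) (fun _ => j) x (subset_closure hx)
      calc ‖(n.choose m : ℂ) * ((dop v)^[m] (fun y => (χ n y : ℂ)) x) * ((dop v)^[n - m] φ x)‖
          = (n.choose m : ℝ) * (‖(dop v)^[m] (fun y => (χ n y : ℂ)) x‖ * ‖(dop v)^[n - m] φ x‖) := by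
            rw [norm_mul, norm_mul]
            simp [mul_assoc]
        _ ≤ (n.choose m : ℝ) * ((L * (L * n) ^ m) * (Cφ * h ^ (n - m) * M (n - m))) := by
            apply mul_le_mul_of_nonneg_left _ (by positivity)
            exact mul_le_mul hχbound hφbound (norm_nonneg _)
              (by positivity)
        _ = (n.choose m : ℝ) * (L * Cφ * L ^ m * h ^ (n - m) * ((n : ℝ) ^ m * M (n - m))) := by
            rw [mul_pow]; ring
        _ ≤ (n.choose m : ℝ) * (L * Cφ * L ^ m * h ^ (n - m) * (C * k ^ m * M n)) := by
            apply mul_le_mul_of_nonneg_left _ (by positivity)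
            apply mul_le_mul_of_nonneg_left
              (key_term M hpos hM0 hlc C k hC hk hCk n m hn hmn) (by positivity)
        _ = (n.choose m : ℝ) * (C * L * Cφ * ((L * k) ^ m * h ^ (n - m)) * M n) := by
            rw [mul_pow]; ring
    calc ‖∑ m ∈ Finset.range (n + 1),
          (n.choose m : ℂ) * ((dop v)^[m] (fun y => (χ n y : ℂ)) x) * ((dop v)^[n - m] φ x)‖
        ≤ ∑ m ∈ Finset.range (n + 1),
          ‖(n.choose m : ℂ) * ((dop v)^[m] (fun y => (χ n y : ℂ)) x) * ((dop v)^[n - m] φ x)‖ :=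
          norm_sum_le _ _
      _ ≤ ∑ m ∈ Finset.range (n + 1),
          (n.choose m : ℝ) * (C * L * Cφ * ((L * k) ^ m * h ^ (n - m)) * M n) :=
          Finset.sum_le_sum hterm
      _ = C * L * Cφ * (∑ m ∈ Finset.range (n + 1),
            (L * k) ^ m * h ^ (n - m) * (n.choose m : ℝ)) * M n := by
          rw [Finset.mul_sum, Finset.sum_mul]
          apply Finset.sum_congr rfl
          intro m _
          ring
      _ = Bn := by rw [← add_pow, hBn, add_comm (L * k) h]
  -- integrability of the iterated derivative
  have hiter_cs : HasCompactSupport ((dop v)^[n] ψ) :=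
    hψcs.mono' ((subset_tsupport _).trans (tsupport_dop_iterate_subset n))
  have hiter_int : Integrable ((dop v)^[n] ψ) :=
    Continuous.integrable_of_hasCompactSupport (contDiff_dop_iterate hψsm n).continuous hiter_cs
  have hvol : volume Ω < ⊤ := lt_of_le_of_lt (measure_mono subset_closure) hΩc.measure_lt_top
  have hFTle : ‖FT d ((dop v)^[n] ψ) ξ‖ ≤ Bn * (volume Ω).toReal := by
    have hnorm1 : ∀ x : EuclideanSpace ℝ (Fin d),
        ‖Complex.exp (-Complex.I * ((inner ℝ x ξ : ℝ) : ℂ)) * ((dop v)^[n] ψ x)‖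
          = ‖(dop v)^[n] ψ x‖ := by
      intro x
      rw [norm_mul]
      have h1 : ‖Complex.exp (-Complex.I * ((inner ℝ x ξ : ℝ) : ℂ))‖ = 1 := by
        rw [Complex.norm_exp]
        norm_num [Complex.mul_re]
      rw [h1, one_mul]
    calc ‖FT d ((dop v)^[n] ψ) ξ‖
        ≤ ∫ x : EuclideanSpace ℝ (Fin d),
            ‖Complex.exp (-Complex.I * ((inner ℝ x ξ : ℝ) : ℂ)) * ((dop v)^[n] ψ x)‖ :=
          norm_integral_le_integral_norm _
      _ = ∫ x : EuclideanSpace ℝ (Fin d), ‖(dop v)^[n] ψ x‖ := by simp only [hnorm1]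
      _ = ∫ x in Ω, ‖(dop v)^[n] ψ x‖ :=
          (setIntegral_eq_integral_of_forall_compl_eq_zero
            (fun x hx => by rw [hsupp_iter x hx, norm_zero])).symm
      _ ≤ ∫ _x in Ω, Bn :=
          setIntegral_mono_on hiter_int.norm.integrableOn
            (integrableOn_const hvol.ne) hΩ.measurableSet (fun x hx => hpt x hx)
      _ = (volume Ω).toReal * Bn := by rw [setIntegral_const, smul_eq_mul, measureReal_def]
      _ = Bn * (volume Ω).toReal := mul_comm _ _
  calc ‖ξ‖ ^ n * ‖FT d ψ ξ‖
      ≤ (Real.sqrt d * |ξ j|) ^ n * ‖FT d ψ ξ‖ :=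
        mul_le_mul_of_nonneg_right (pow_le_pow_left₀ (norm_nonneg ξ) hξj n) (norm_nonneg _)
    _ = Real.sqrt d ^ n * (|ξ j| ^ n * ‖FT d ψ ξ‖) := by rw [mul_pow]; ring
    _ = Real.sqrt d ^ n * ‖FT d ((dop v)^[n] ψ) ξ‖ := by rw [hFT]
    _ ≤ Real.sqrt d ^ n * (Bn * (volume Ω).toReal) :=
        mul_le_mul_of_nonneg_left hFTle (by positivity)
    _ = C * L * (volume Ω).toReal * Cφ * (Real.sqrt d * (h + L * k)) ^ n * M n := by
        rw [hBn, mul_pow]; ring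
end Leibniz
end

section
/- For the function sinc(z) = sin(z)/z: (a) for 0 < a < π, |sinc(x)| ≤ sinc(a) < 1 whenever a ≤ |x| ≤ π (x real); (b) |sinc(x+iy)| ≤ e^{|y|}/π whenever |x| ≥ π. Consequently, for any μ with max{sinc(a), 1/π} < μ < 1, there exists r > 0 such that |sinc(x+iy)| ≤ μ for all |x| ≥ a, |y| ≤ r. -/
open Real

lemma key1 : ∀ t ∈ Set.Icc (0:ℝ) π, t * Real.cos t ≤ Real.sin t := by
  have h : MonotoneOn (fun t => Real.sin t - t * Real.cos t) (Set.Icc 0 π) := by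
    apply monotoneOn_of_deriv_nonneg (convex_Icc _ _)
    · exact (Real.continuous_sin.sub (continuous_id.mul Real.continuous_cos)).continuousOn
    · intro t _
      exact ((Real.differentiable_sin t).sub
        ((differentiable_id t).mul (Real.differentiable_cos t))).differentiableWithinAt
    · intro t ht
      rw [interior_Icc] at ht
      have hd : HasDerivAt (fun t => Real.sin t - t * Real.cos t) (t * Real.sin t) t := by
        have := (Real.hasDerivAt_sin t).sub ((hasDerivAt_id t).mul (Real.hasDerivAt_cos t))
        exact this.congr_deriv (by simp [id])
      rw [hd.deriv]
      have := Real.sin_nonneg_of_nonneg_of_le_pi ht.1.le ht.2.le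
      exact mul_nonneg ht.1.le this
  intro t ht
  have := h (Set.left_mem_Icc.2 Real.pi_pos.le) ht ht.1
  simpa using this

lemma sinc_anti (a : ℝ) (ha : 0 < a) : AntitoneOn (fun t => Real.sin t / t) (Set.Icc a π) := by
  apply antitoneOn_of_deriv_nonpos (convex_Icc _ _)
  · exact Real.continuous_sin.continuousOn.div continuousOn_id
      (fun t ht => (ha.trans_le ht.1).ne')
  · intro t ht
    rw [interior_Icc] at ht
    exact ((Real.differentiable_sin t).div (differentiable_id t)
      (ha.trans ht.1).ne').differentiableWithinAt
  · intro t ht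
    rw [interior_Icc] at ht
    have htpos : 0 < t := ha.trans ht.1
    have hd : HasDerivAt (fun t => Real.sin t / t)
        ((Real.cos t * t - Real.sin t * 1) / t ^ 2) t :=
      (Real.hasDerivAt_sin t).div (hasDerivAt_id t) htpos.ne'
    rw [hd.deriv]
    apply div_nonpos_of_nonpos_of_nonneg _ (sq_nonneg t)
    have := key1 t ⟨htpos.le, ht.2.le⟩
    nlinarith

lemma norm_sin_le_exp (z : ℂ) : ‖Complex.sin z‖ ≤ Real.exp |z.im| := by
  rw [Complex.sin]
  have h1 : ‖Complex.exp (-z * Complex.I)‖ = Real.exp z.im := by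
    rw [Complex.norm_exp]; simp
  have h2 : ‖Complex.exp (z * Complex.I)‖ = Real.exp (-z.im) := by
    rw [Complex.norm_exp]; simp
  calc ‖(Complex.exp (-z * Complex.I) - Complex.exp (z * Complex.I)) * Complex.I / 2‖
      = ‖Complex.exp (-z * Complex.I) - Complex.exp (z * Complex.I)‖ / 2 := by
        simp [norm_div, norm_mul]
    _ ≤ (Real.exp z.im + Real.exp (-z.im)) / 2 := by
        rw [← h1, ← h2]
        have := norm_sub_le (Complex.exp (-z * Complex.I)) (Complex.exp (z * Complex.I))
        linarith
    _ ≤ Real.exp |z.im| := by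
        have h3 : Real.exp z.im ≤ Real.exp |z.im| := Real.exp_le_exp.2 (le_abs_self _)
        have h4 : Real.exp (-z.im) ≤ Real.exp |z.im| := Real.exp_le_exp.2 (neg_le_abs _)
        linarith

lemma norm_sin_le' (x y : ℝ) :
    ‖Complex.sin (x + y * Complex.I)‖ ≤ |Real.sin x| * Real.cosh y + |Real.sinh y| := by
  rw [Complex.sin_add, Complex.cos_mul_I, Complex.sin_mul_I]
  calc ‖Complex.sin x * Complex.cosh y + Complex.cos x * (Complex.sinh y * Complex.I)‖
      ≤ ‖Complex.sin x * Complex.cosh y‖ + ‖Complex.cos x * (Complex.sinh y * Complex.I)‖ :=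
        norm_add_le _ _
    _ = |Real.sin x| * Real.cosh y + |Real.cos x| * |Real.sinh y| := by
        simp [norm_mul, ← Complex.ofReal_sin, ← Complex.ofReal_cos, ← Complex.ofReal_cosh,
          ← Complex.ofReal_sinh, Complex.norm_real,
          abs_of_nonneg (Real.cosh_pos (x := y)).le]
    _ ≤ |Real.sin x| * Real.cosh y + 1 * |Real.sinh y| := by
        gcongr; exact Real.abs_cos_le_one x
    _ = |Real.sin x| * Real.cosh y + |Real.sinh y| := by ring

lemma abs_sin_eq (x : ℝ) (hx : |x| ≤ π) : |Real.sin x| = Real.sin |x| := by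
  rcases abs_cases x with ⟨h1, h2⟩ | ⟨h1, h2⟩
  · rw [h1, abs_of_nonneg (Real.sin_nonneg_of_nonneg_of_le_pi h2 (h1 ▸ hx))]
  · have hx' : -π ≤ x := by rw [h1] at hx; linarith
    rw [h1, Real.sin_neg,
      abs_of_nonpos (Real.sin_nonpos_of_nonpos_of_neg_pi_le h2.le hx')]

/-- `sinc z = sin z / z`, `sinc 0 = 1`, as a function on `ℂ`. -/
noncomputable def csinc (z : ℂ) : ℂ := if z = 0 then 1 else Complex.sin z / z

lemma norm_csinc (z : ℂ) (hz : z ≠ 0) : ‖csinc z‖ = ‖Complex.sin z‖ / ‖z‖ := by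
  rw [csinc, if_neg hz, norm_div]

theorem stmt9 (a : ℝ) (ha : 0 < a) (haπ : a < π) :
    -- (a) on the real axis
    ((∀ x : ℝ, a ≤ |x| → |x| ≤ π → ‖csinc x‖ ≤ Real.sin a / a) ∧ Real.sin a / a < 1) ∧
    -- (b) away from the real strip
    (∀ x y : ℝ, π ≤ |x| → ‖csinc (x + y * Complex.I)‖ ≤ Real.exp |y| / π) ∧
    -- consequence
    (∀ μ : ℝ, max (Real.sin a / a) (1 / π) < μ → μ < 1 →
      ∃ r > (0 : ℝ), ∀ x y : ℝ, a ≤ |x| → |y| ≤ r →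
        ‖csinc (x + y * Complex.I)‖ ≤ μ) := by
  -- key real estimate
  have key : ∀ x : ℝ, a ≤ |x| → |x| ≤ π → |Real.sin x| / |x| ≤ Real.sin a / a := by
    intro x hax hxπ
    rw [abs_sin_eq x hxπ]
    exact sinc_anti a ha (Set.left_mem_Icc.2 haπ.le) ⟨hax, hxπ⟩ hax
  have hπ : (0:ℝ) < π := Real.pi_pos
  have parta : ∀ x : ℝ, a ≤ |x| → |x| ≤ π → ‖csinc (x:ℂ)‖ ≤ Real.sin a / a := by
    intro x hax hxπ
    have hx0 : x ≠ 0 := by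
      intro h; rw [h] at hax; simp at hax; linarith
    have hz : (x:ℂ) ≠ 0 := by exact_mod_cast hx0
    rw [norm_csinc _ hz, ← Complex.ofReal_sin, Complex.norm_real, Complex.norm_real,
      Real.norm_eq_abs, Real.norm_eq_abs]
    exact key x hax hxπ
  have partb : ∀ x y : ℝ, π ≤ |x| →
      ‖csinc (x + y * Complex.I)‖ ≤ Real.exp |y| / π := by
    intro x y hx
    set z : ℂ := x + y * Complex.I with hzdef
    have hre : z.re = x := by simp [hzdef]
    have him : z.im = y := by simp [hzdef]
    have hz : z ≠ 0 := by
      intro h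
      rw [h] at hre
      simp at hre
      rw [← hre] at hx; simp at hx; linarith
    have hzn : π ≤ ‖z‖ := by
      calc π ≤ |x| := hx
        _ = |z.re| := by rw [hre]
        _ ≤ ‖z‖ := Complex.abs_re_le_norm z
        _ = ‖z‖ := rfl
    rw [norm_csinc _ hz]
    have h1 : ‖Complex.sin z‖ ≤ Real.exp |y| := him ▸ norm_sin_le_exp z
    exact div_le_div₀ (Real.exp_pos _).le h1 hπ hzn
  refine ⟨⟨parta, ?_⟩, partb, ?_⟩
  · rw [div_lt_one ha]; exact Real.sin_lt ha
  · intro μ hμ hμ1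
    set s := Real.sin a / a with hs
    have hsμ : s < μ := lt_of_le_of_lt (le_max_left _ _) hμ
    have hπμ : 1 < π * μ := by
      have := lt_of_le_of_lt (le_max_right _ _) hμ
      rw [div_lt_iff₀ hπ] at this; linarith [this]
    have hμpos : 0 < μ := lt_trans (by positivity : (0:ℝ) < 1/π) (lt_of_le_of_lt (le_max_right _ _) hμ)
    have hlog : 0 < Real.log (π * μ) := Real.log_pos hπμ
    -- continuity to get δ
    have hF : ContinuousAt (fun r => s * Real.cosh r + Real.sinh r / a) 0 := by
      fun_prop
    have hev : ∀ᶠ r in nhds (0:ℝ), s * Real.cosh r + Real.sinh r / a < μ := by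
      apply hF.eventually_lt continuousAt_const
      simp [hsμ]
    obtain ⟨δ, hδ, hδF⟩ := Metric.eventually_nhds_iff.1 hev
    refine ⟨min (δ/2) (Real.log (π * μ)), lt_min (by linarith) hlog, ?_⟩
    intro x y hax hyr
    have hyr1 : |y| ≤ δ/2 := hyr.trans (min_le_left _ _)
    have hyr2 : |y| ≤ Real.log (π * μ) := hyr.trans (min_le_right _ _)
    set z : ℂ := x + y * Complex.I with hzdef
    have hre : z.re = x := by simp [hzdef]
    have him : z.im = y := by simp [hzdef]
    have hx0 : 0 < |x| := lt_of_lt_of_le ha hax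
    have hz : z ≠ 0 := by
      intro h; rw [h] at hre; simp at hre; rw [← hre] at hx0; simp at hx0
    have hzn : |x| ≤ ‖z‖ := by
      calc |x| = |z.re| := by rw [hre]
        _ ≤ ‖z‖ := Complex.abs_re_le_norm z
        _ = ‖z‖ := rfl
    rcases le_or_gt π |x| with hπx | hxπ
    · -- outer region: use part (b)
      calc ‖csinc z‖ ≤ Real.exp |y| / π := partb x y hπx
        _ ≤ Real.exp (Real.log (π * μ)) / π := by gcongr
        _ = μ := by
          rw [Real.exp_log (by positivity)]
          field_simp
    · -- middle region
      have hsinx : |Real.sin x| / |x| ≤ s := key x hax hxπ.le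
      have hcosh : Real.cosh y ≤ Real.cosh (δ/2) := by
        rw [Real.cosh_le_cosh]
        rw [abs_of_nonneg (by linarith : (0:ℝ) ≤ δ/2)]
        exact hyr1
      have hsinh : |Real.sinh y| ≤ Real.sinh (δ/2) := by
        rw [Real.abs_sinh]
        exact Real.sinh_le_sinh.2 hyr1
      have hδ2 : s * Real.cosh (δ/2) + Real.sinh (δ/2) / a < μ := by
        apply hδF
        rw [Real.dist_eq, sub_zero, abs_of_nonneg (by linarith : (0:ℝ) ≤ δ/2)]
        linarith
      have hsinhnn : 0 ≤ Real.sinh (δ/2) := by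
        rw [← Real.sinh_zero]
        exact Real.sinh_le_sinh.2 (by linarith)
      have hcoshnn : (0:ℝ) ≤ Real.cosh (δ/2) := (Real.cosh_pos _).le
      have hb : ‖Complex.sin z‖ ≤ |Real.sin x| * Real.cosh (δ/2) + Real.sinh (δ/2) := by
        calc ‖Complex.sin z‖ ≤ |Real.sin x| * Real.cosh y + |Real.sinh y| := norm_sin_le' x y
          _ ≤ _ := by gcongr
      rw [norm_csinc _ hz]
      calc ‖Complex.sin z‖ / ‖z‖
          ≤ (|Real.sin x| * Real.cosh (δ/2) + Real.sinh (δ/2)) / |x| :=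
            div_le_div₀ (by positivity) hb hx0 hzn
        _ = |Real.sin x| / |x| * Real.cosh (δ/2) + Real.sinh (δ/2) / |x| := by ring
        _ ≤ s * Real.cosh (δ/2) + Real.sinh (δ/2) / a := by gcongr
        _ ≤ μ := hδ2.le
end

section
/- Quantified quotient estimate: let θ_n(z) = n F^{-1}(κ_n ∗ H_n)(nz) where (κ_n) is an analytic cut-off sequence (so in particular there exist C, D > 0 with |z||F^{-1}(κ_n)(z)| ≤ C e^{D|Im z|} for all z ∈ ℂ, n ∈ ℕ) and H_n as above. If 0 < r_0 is chosen so that e^{D r_0} μ < 1 where μ bounds |sinc| on {|Re z| ≥ a, |Im z| ≤ r_0}, then |θ_n(x+iy)| ≤ (C/a)(e^{D r_0} μ)^n for all |x| ≥ a, |y| ≤ r_0, n ∈ ℕ; and by Cauchy estimates, for every c > 0 there exist S, δ, γ > 0 with sup_{|x| ≥ c} |θ_n^{(α)}(x)| ≤ S e^{-δ n} γ^α α! for all α ∈ ℕ₀, n ∈ ℕ. -/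
open Real

lemma csinc_eq {z : ℂ} (hz : z ≠ 0) : csinc z = Complex.sin z / z := if_neg hz

/-- iterated derivative of the real restriction of a holomorphic function. -/
lemma iteratedDeriv_ofReal_of_diffOn {U : Set ℂ} (hU : IsOpen U) :
    ∀ (α : ℕ) (f : ℂ → ℂ), DifferentiableOn ℂ f U → ∀ x : ℝ, (x : ℂ) ∈ U →
      iteratedDeriv α (fun t : ℝ => f t) x = iteratedDeriv α f x := by
  intro α
  induction α with
  | zero => intro f hf x hx; simp
  | succ α ih =>
    intro f hf x hx
    rw [iteratedDeriv_succ', iteratedDeriv_succ']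
    have hdf : DifferentiableOn ℂ (deriv f) U :=
      ((hf.analyticOnNhd hU).deriv).differentiableOn
    have heq : deriv (fun t : ℝ => f t) =ᶠ[nhds x] (fun t : ℝ => deriv f t) := by
      have hmem : {t : ℝ | (t : ℂ) ∈ U} ∈ nhds x :=
        (hU.preimage Complex.continuous_ofReal).mem_nhds hx
      filter_upwards [hmem] with t ht
      exact (((hf.differentiableAt (hU.mem_nhds ht)).hasDerivAt).comp_ofReal).deriv
    rw [heq.iteratedDeriv_eq α]
    exact ih (deriv f) hdf x hx

/-- Cauchy estimate for iterated derivatives. -/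
lemma cauchy_iteratedDeriv_bound {f : ℂ → ℂ} {z : ℂ} {R M : ℝ} (hR : 0 < R)
    (hf : DifferentiableOn ℂ f (Metric.closedBall z R))
    (hM : ∀ w ∈ Metric.closedBall z R, ‖f w‖ ≤ M) (α : ℕ) :
    ‖iteratedDeriv α f z‖ ≤ α.factorial * M / R ^ α := by
  set R' : NNReal := ⟨R, hR.le⟩ with hR'def
  have hcoe : (R' : ℝ) = R := rfl
  have hR0 : (0 : NNReal) < R' := by exact_mod_cast hR
  rw [← hcoe] at hf hM ⊢
  have hp := hf.hasFPowerSeriesOnBall hR0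
  set p := cauchyPowerSeries f z R' with hpdef
  have h1 : iteratedDeriv α f z = (α.factorial : ℂ) * (p α fun _ => 1) := by
    rw [iteratedDeriv_eq_iteratedFDeriv, ← hp.factorial_smul (1 : ℂ) α]
    simp [nsmul_eq_mul]
  have hM0 : 0 ≤ M := le_trans (norm_nonneg _) (hM z (Metric.mem_closedBall_self hR.le))
  have hint : (∫ θ : ℝ in (0)..2 * π, ‖f (circleMap z R' θ)‖) ≤ 2 * π * M := by
    have hcont : Continuous fun θ : ℝ => ‖f (circleMap z R' θ)‖ := by
      refine (hf.continuousOn.comp_continuous (continuous_circleMap z R') ?_).norm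
      intro θ
      exact circleMap_mem_closedBall z hR.le θ
    calc (∫ θ : ℝ in (0)..2 * π, ‖f (circleMap z R' θ)‖)
        ≤ ∫ _ : ℝ in (0)..2 * π, M := by
          refine intervalIntegral.integral_mono_on Real.two_pi_pos.le
            (hcont.intervalIntegrable _ _) (intervalIntegrable_const) ?_
          intro θ _
          exact hM _ (circleMap_mem_closedBall z hR.le θ)
      _ = 2 * π * M := by simp [smul_eq_mul]
  have h2 : ‖p α fun _ => 1‖ ≤ ‖p α‖ := by
    calc ‖p α fun _ => 1‖ ≤ ‖p α‖ * ∏ _i : Fin α, ‖(1 : ℂ)‖ := (p α).le_opNorm _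
      _ = ‖p α‖ := by simp
  have h3 : ‖p α‖ ≤ M * (R' : ℝ)⁻¹ ^ α := by
    refine (norm_cauchyPowerSeries_le f z R' α).trans ?_
    rw [abs_of_nonneg R'.coe_nonneg]
    gcongr
    calc (2 * π)⁻¹ * ∫ θ : ℝ in (0)..2 * π, ‖f (circleMap z R' θ)‖
        ≤ (2 * π)⁻¹ * (2 * π * M) := by
          gcongr
      _ = M := by field_simp
  rw [h1, norm_mul]
  have : ‖(α.factorial : ℂ)‖ = (α.factorial : ℝ) := by
    simp
  rw [this]
  calc (α.factorial : ℝ) * ‖p α fun _ => 1‖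
      ≤ (α.factorial : ℝ) * (M * (R' : ℝ)⁻¹ ^ α) := by
        gcongr
        exact h2.trans h3
    _ = α.factorial * M / (R' : ℝ) ^ α := by rw [inv_pow]; ring

theorem stmt11 (a : ℝ) (ha : 0 < a) (haπ : a < π)
    -- κ n is the entire function F⁻¹(κ_n)
    (κ : ℕ → ℂ → ℂ) (hκ : ∀ n, Differentiable ℂ (κ n))
    (C D : ℝ) (hC : 0 < C) (hD : 0 < D)
    (hκb : ∀ (n : ℕ) (z : ℂ), ‖z‖ * ‖κ n z‖ ≤ C * Real.exp (D * |z.im|))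
    (μ : ℝ) (hμ0 : 0 < μ) (hμ1 : μ < 1)
    (r₀ : ℝ) (hr₀ : 0 < r₀) (hμr : Real.exp (D * r₀) * μ < 1)
    (hsinc : ∀ x y : ℝ, a ≤ |x| → |y| ≤ r₀ → ‖csinc (x + y * Complex.I)‖ ≤ μ)
    -- θ_n(z) = n F⁻¹(κ_n)(nz) (sinc z)^n
    (θ : ℕ → ℂ → ℂ)
    (hθ : ∀ (n : ℕ) (z : ℂ), θ n z = (n : ℂ) * κ n ((n : ℂ) * z) * (csinc z) ^ n) :
    (∀ n : ℕ, 1 ≤ n → ∀ x y : ℝ, a ≤ |x| → |y| ≤ r₀ →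
        ‖θ n (x + y * Complex.I)‖ ≤ C / a * (Real.exp (D * r₀) * μ) ^ n) ∧
    (∀ c : ℝ, 0 < c → ∃ S > (0 : ℝ), ∃ δ > (0 : ℝ), ∃ γ > (0 : ℝ),
      ∀ (α n : ℕ), 1 ≤ n → ∀ x : ℝ, c ≤ |x| →
        ‖iteratedDeriv α (fun t : ℝ => θ n t) x‖ ≤
          S * Real.exp (-δ * n) * γ ^ α * (Nat.factorial α)) := by
  -- the key pointwise estimate
  have key : ∀ (n : ℕ), 1 ≤ n → ∀ (b r ν : ℝ), 0 < b → 0 ≤ r → 0 ≤ ν →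
      ∀ z : ℂ, b ≤ |z.re| → |z.im| ≤ r → ‖csinc z‖ ≤ ν →
      ‖θ n z‖ ≤ C / b * (Real.exp (D * r) * ν) ^ n := by
    intro n hn b r ν hb hr hν z hzre hzim hzs
    rw [hθ n z, norm_mul, norm_mul, norm_pow]
    have him : ((n : ℂ) * z).im = n * z.im := by simp
    have hexp : C * Real.exp (D * |((n : ℂ) * z).im|) ≤ C * Real.exp (D * r) ^ n := by
      rw [him, ← Real.exp_nat_mul]
      apply mul_le_mul_of_nonneg_left _ hC.le
      apply Real.exp_le_exp.mpr
      rw [abs_mul, Nat.abs_cast]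
      calc D * ((n : ℝ) * |z.im|) ≤ D * ((n : ℝ) * r) := by
            apply mul_le_mul_of_nonneg_left _ hD.le
            exact mul_le_mul_of_nonneg_left hzim (Nat.cast_nonneg n)
        _ = (n : ℝ) * (D * r) := by ring
    have hnb : (n : ℝ) * b ≤ ‖(n : ℂ) * z‖ := by
      rw [norm_mul, Complex.norm_natCast]
      apply mul_le_mul_of_nonneg_left _ (Nat.cast_nonneg n)
      exact hzre.trans (Complex.abs_re_le_norm z)
    have hκ1 : ((n : ℝ) * b) * ‖κ n ((n : ℂ) * z)‖ ≤ C * Real.exp (D * r) ^ n :=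
      le_trans (mul_le_mul_of_nonneg_right hnb (norm_nonneg _))
        (le_trans (hκb n ((n : ℂ) * z)) hexp)
    have hn0 : (0 : ℝ) < n := by exact_mod_cast hn
    have hκ2 : (n : ℝ) * ‖κ n ((n : ℂ) * z)‖ ≤ C * Real.exp (D * r) ^ n / b := by
      rw [le_div_iff₀ hb]
      calc (n : ℝ) * ‖κ n ((n : ℂ) * z)‖ * b = ((n : ℝ) * b) * ‖κ n ((n : ℂ) * z)‖ := by ring
        _ ≤ C * Real.exp (D * r) ^ n := hκ1
    have hpow : ‖csinc z‖ ^ n ≤ ν ^ n := pow_le_pow_left₀ (norm_nonneg _) hzs n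
    calc ‖(n : ℂ)‖ * ‖κ n ((n : ℂ) * z)‖ * ‖csinc z‖ ^ n
        = ((n : ℝ) * ‖κ n ((n : ℂ) * z)‖) * ‖csinc z‖ ^ n := by
          rw [Complex.norm_natCast]
      _ ≤ (C * Real.exp (D * r) ^ n / b) * ν ^ n := by
          apply mul_le_mul hκ2 hpow (pow_nonneg (norm_nonneg _) n)
          positivity
      _ = C / b * (Real.exp (D * r) * ν) ^ n := by rw [mul_pow]; ring
  constructor
  · intro n hn x y hx hy
    have hre : ((x : ℂ) + (y : ℂ) * Complex.I).re = x := by simp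
    have him : ((x : ℂ) + (y : ℂ) * Complex.I).im = y := by simp
    have h := key n hn a r₀ μ ha hr₀.le hμ0.le ((x : ℂ) + y * Complex.I)
      (by rw [hre]; exact hx) (by rw [him]; exact hy) (hsinc x y hx hy)
    exact h
  · intro c hc
    set c' : ℝ := min (c / 2) (a / 2) with hc'def
    have hc'0 : 0 < c' := lt_min (by linarith) (by linarith)
    have hc'a : c' ≤ a := (min_le_right _ _).trans (by linarith)
    have hc'c : c' ≤ c / 2 := min_le_left _ _
    -- the compact set on the real axis
    set K : Set ℂ := {z : ℂ | z.im = 0 ∧ c' ≤ |z.re| ∧ |z.re| ≤ a} with hKdef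
    have hKclosed : IsClosed K := by
      have h1 : IsClosed {z : ℂ | z.im = 0} := isClosed_eq Complex.continuous_im continuous_const
      have h2 : IsClosed {z : ℂ | c' ≤ |z.re|} :=
        isClosed_le continuous_const Complex.continuous_re.abs
      have h3 : IsClosed {z : ℂ | |z.re| ≤ a} :=
        isClosed_le Complex.continuous_re.abs continuous_const
      have : K = {z : ℂ | z.im = 0} ∩ ({z : ℂ | c' ≤ |z.re|} ∩ {z : ℂ | |z.re| ≤ a}) := by
        ext z; simp [hKdef, and_assoc]
      rw [this]
      exact h1.inter (h2.inter h3)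
    have hKcompact : IsCompact K := by
      apply Metric.isCompact_of_isClosed_isBounded hKclosed
      apply (Metric.isBounded_closedBall (x := (0:ℂ)) (r := a + 1)).subset
      intro z hz
      rw [Metric.mem_closedBall, dist_zero_right]
      calc ‖z‖ ≤ |z.re| + |z.im| := Complex.norm_le_abs_re_add_abs_im z
        _ ≤ a + 1 := by rw [hz.1]; simpa using hz.2.2.trans (by linarith)
    have haK : (a : ℂ) ∈ K := by
      refine ⟨by simp, ?_, ?_⟩ <;> simp [abs_of_pos ha, hc'a]
    have hKne0 : ∀ z ∈ K, z ≠ 0 := by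
      intro z hz h0
      rw [h0] at hz
      simp only [hKdef, Set.mem_setOf_eq, Complex.zero_re, abs_zero, Complex.zero_im] at hz
      linarith [hz.2.1]
    have hGcont : ContinuousOn (fun z : ℂ => ‖Complex.sin z / z‖) {z : ℂ | z.re ≠ 0} := by
      apply ContinuousOn.norm
      exact Complex.continuous_sin.continuousOn.div continuous_id.continuousOn
        (fun z hz h0 => hz (by simp [h0]))
    have hKV : K ⊆ {z : ℂ | z.re ≠ 0} := by
      intro z hz
      simp only [Set.mem_setOf_eq]
      intro h0
      have h2 : c' ≤ |z.re| := hz.2.1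
      rw [h0, abs_zero] at h2
      linarith
    obtain ⟨z₀, hz₀K, hz₀max⟩ := hKcompact.exists_isMaxOn ⟨(a : ℂ), haK⟩ (hGcont.mono hKV)
    set m : ℝ := ‖Complex.sin z₀ / z₀‖ with hmdef
    have hm0 : 0 ≤ m := norm_nonneg _
    have hm1 : m < 1 := by
      have hz₀re : z₀ = (z₀.re : ℂ) := by
        apply Complex.ext <;> simp [hz₀K.1]
      have hx₀ : z₀.re ≠ 0 := by
        intro h0
        have := hz₀K.2.1
        rw [h0] at this
        simp only [abs_zero] at this
        linarith
      rw [hmdef, hz₀re, ← Complex.ofReal_sin, ← Complex.ofReal_div, Complex.norm_real,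
        Real.norm_eq_abs, abs_div]
      rw [div_lt_one (abs_pos.mpr hx₀)]
      exact Real.abs_sin_lt_abs hx₀
    set m' : ℝ := (m + 1) / 2 with hm'def
    have hm'0 : 0 < m' := by rw [hm'def]; linarith
    have hm'1 : m' < 1 := by rw [hm'def]; linarith
    have hmm' : m < m' := by rw [hm'def]; linarith
    -- open set
    set U : Set ℂ := {z : ℂ | z.re ≠ 0} ∩ (fun z : ℂ => ‖Complex.sin z / z‖) ⁻¹' Set.Iio m'
      with hUdef
    have hUopen : IsOpen U := by
      apply hGcont.isOpen_inter_preimage _ isOpen_Iio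
      exact isOpen_compl_singleton.preimage Complex.continuous_re
    have hKU : K ⊆ U := by
      intro z hz
      refine ⟨hKV hz, ?_⟩
      simp only [Set.mem_preimage, Set.mem_Iio]
      exact lt_of_le_of_lt (hz₀max hz) hmm'
    obtain ⟨δt, hδt, hδtsub⟩ := hKcompact.exists_thickening_subset_open hUopen hKU
    have hlogm' : Real.log m' < 0 := Real.log_neg hm'0 hm'1
    -- choose the width r
    set r : ℝ := min r₀ (min (δt / 2) (-Real.log m' / (2 * D))) with hrdef
    have hr0 : 0 < r := by
      apply lt_min hr₀
      apply lt_min (by linarith)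
      apply div_pos (by linarith) (by linarith)
    have hrr₀ : r ≤ r₀ := min_le_left _ _
    have hrδt : r ≤ δt / 2 := le_trans (min_le_right _ _) (min_le_left _ _)
    have hrlog : r ≤ -Real.log m' / (2 * D) := le_trans (min_le_right _ _) (min_le_right _ _)
    set ν : ℝ := max μ m' with hνdef
    have hν0 : 0 < ν := lt_max_of_lt_left hμ0
    set q : ℝ := Real.exp (D * r) * ν with hqdef
    have hq0 : 0 < q := mul_pos (Real.exp_pos _) hν0
    have hq1 : q < 1 := by
      rw [hqdef, hνdef, mul_max_of_nonneg _ _ (Real.exp_nonneg _)]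
      apply max_lt
      · calc Real.exp (D * r) * μ ≤ Real.exp (D * r₀) * μ := by
              apply mul_le_mul_of_nonneg_right _ hμ0.le
              exact Real.exp_le_exp.mpr (by nlinarith)
          _ < 1 := hμr
      · have hD0 : D ≠ 0 := ne_of_gt hD
        have h1 : D * r ≤ -Real.log m' / 2 := by
          calc D * r ≤ D * (-Real.log m' / (2 * D)) :=
                mul_le_mul_of_nonneg_left hrlog hD.le
            _ = -Real.log m' / 2 := by field_simp
        calc Real.exp (D * r) * m' ≤ Real.exp (-Real.log m' / 2) * m' := by
              apply mul_le_mul_of_nonneg_right (Real.exp_le_exp.mpr h1) hm'0.le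
          _ = Real.exp (Real.log m' / 2) := by
              have hstep : Real.exp (-Real.log m' / 2) * m'
                  = Real.exp (-Real.log m' / 2) * Real.exp (Real.log m') := by
                rw [Real.exp_log hm'0]
              rw [hstep, ← Real.exp_add]
              congr 1
              ring
          _ < 1 := by
            rw [← Real.exp_zero]
            apply Real.exp_lt_exp.mpr
            linarith
    -- radius
    set ρ : ℝ := min c' r with hρdef
    have hρ0 : 0 < ρ := lt_min hc'0 hr0
    have hρc' : ρ ≤ c' := min_le_left _ _
    have hρr : ρ ≤ r := min_le_right _ _
    refine ⟨C / c', div_pos hC hc'0, -Real.log q, neg_pos.mpr (Real.log_neg hq0 hq1),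
      1 / ρ, by positivity, ?_⟩
    intro α n hn x hx
    have hqe : q ^ n = Real.exp (-(-Real.log q) * n) := by
      rw [neg_neg, mul_comm, Real.exp_nat_mul, Real.exp_log hq0]
    -- differentiability of θ n away from the imaginary axis
    have hθdiff : DifferentiableOn ℂ (θ n) {z : ℂ | z.re ≠ 0} := by
      have hg : DifferentiableOn ℂ
          (fun z : ℂ => (n : ℂ) * κ n ((n : ℂ) * z) * (Complex.sin z / z) ^ n)
          {z : ℂ | z.re ≠ 0} := by
        apply DifferentiableOn.mul
        · apply DifferentiableOn.const_mul
          exact ((hκ n).comp (differentiable_id.const_mul _)).differentiableOn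
        · apply DifferentiableOn.pow
          exact Complex.differentiable_sin.differentiableOn.div differentiableOn_id
            (fun z hz h0 => hz (by simp [h0]))
      apply hg.congr
      intro z hz
      rw [hθ n z, csinc_eq (fun h0 => hz (by simp [h0]))]
    -- points of the closed ball
    have hx0 : ((x : ℝ) : ℂ) ∈ {z : ℂ | z.re ≠ 0} := by
      simp only [Set.mem_setOf_eq, Complex.ofReal_re]
      intro h0
      rw [h0] at hx
      simp only [abs_zero] at hx
      linarith
    have hball : ∀ w ∈ Metric.closedBall ((x : ℝ) : ℂ) ρ,
        c' ≤ |w.re| ∧ |w.im| ≤ r := by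
      intro w hw
      rw [Metric.mem_closedBall, dist_eq_norm] at hw
      have hre : |w.re - x| ≤ ρ := by
        calc |w.re - x| = |(w - (x : ℂ)).re| := by simp
          _ ≤ ‖w - (x : ℂ)‖ := Complex.abs_re_le_norm _
          _ ≤ ρ := hw
      have him : |w.im| ≤ ρ := by
        calc |w.im| = |(w - (x : ℂ)).im| := by simp
          _ ≤ ‖w - (x : ℂ)‖ := Complex.abs_im_le_norm _
          _ ≤ ρ := hw
      constructor
      · have : |x| - |w.re - x| ≤ |w.re| := by
          have := abs_sub_abs_le_abs_sub w.re x
          have h2 : |x| - |w.re| ≤ |x - w.re| := abs_sub_abs_le_abs_sub x w.re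
          rw [abs_sub_comm] at h2
          linarith
        have : c - ρ ≤ |w.re| := by linarith [hre, hx]
        calc c' ≤ c / 2 := hc'c
          _ ≤ c - ρ := by linarith [hρc'.trans hc'c]
          _ ≤ |w.re| := this
      · exact him.trans hρr
    have hsincball : ∀ w ∈ Metric.closedBall ((x : ℝ) : ℂ) ρ, ‖csinc w‖ ≤ ν := by
      intro w hw
      obtain ⟨hwre, hwim⟩ := hball w hw
      by_cases hwa : a ≤ |w.re|
      · have := hsinc w.re w.im hwa (hwim.trans hrr₀)
        rw [Complex.re_add_im] at this
        exact this.trans (le_max_left _ _)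
      · -- use the thickening
        have hwK : w ∈ Metric.thickening δt K := by
          rw [Metric.mem_thickening_iff]
          refine ⟨((w.re : ℝ) : ℂ), ⟨by simp, by simpa using hwre, by simpa using le_of_not_ge hwa⟩, ?_⟩
          have : w - ((w.re : ℝ) : ℂ) = (w.im : ℂ) * Complex.I := by
            apply Complex.ext <;> simp
          rw [dist_eq_norm, this]
          have : ‖(w.im : ℂ) * Complex.I‖ = |w.im| := by
            simp
          rw [this]
          calc |w.im| ≤ r := hwim
            _ ≤ δt / 2 := hrδt
            _ < δt := by linarith
        have hwU := hδtsub hwK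
        obtain ⟨hwre0, hwlt⟩ := hwU
        simp only [Set.mem_preimage, Set.mem_Iio] at hwlt
        have hw0 : w ≠ 0 := fun h0 => hwre0 (by simp [h0])
        rw [csinc_eq hw0]
        exact le_trans hwlt.le (le_max_right _ _)
    -- sup bound on the ball
    have hMbound : ∀ w ∈ Metric.closedBall ((x : ℝ) : ℂ) ρ,
        ‖θ n w‖ ≤ C / c' * Real.exp (-(-Real.log q) * n) := by
      intro w hw
      obtain ⟨hwre, hwim⟩ := hball w hw
      have := key n hn c' r ν hc'0 hr0.le hν0.le w hwre hwim (hsincball w hw)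
      rw [← hqdef, hqe] at this
      exact this
    -- apply Cauchy estimates
    have hdiffball : DifferentiableOn ℂ (θ n) (Metric.closedBall ((x : ℝ) : ℂ) ρ) := by
      apply hθdiff.mono
      intro w hw
      have := (hball w hw).1
      simp only [Set.mem_setOf_eq]
      intro h0
      rw [h0] at this
      simp only [abs_zero] at this
      linarith
    have hcauchy := cauchy_iteratedDeriv_bound hρ0 hdiffball hMbound α
    have heq := iteratedDeriv_ofReal_of_diffOn
      (isOpen_compl_singleton.preimage Complex.continuous_re) α (θ n) hθdiff x hx0
    rw [heq]
    calc ‖iteratedDeriv α (θ n) ((x : ℝ) : ℂ)‖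
        ≤ α.factorial * (C / c' * Real.exp (-(-Real.log q) * n)) / ρ ^ α := hcauchy
      _ = C / c' * Real.exp (-(-Real.log q) * n) * (1 / ρ) ^ α * α.factorial := by
          rw [div_pow, one_pow]
          field_simp
end

section
/- Series summability estimate (core of Lemma 5.6): suppose |ψ_n| ≤ C′ with supp ψ_n ⊆ B(0, rn) \ B̄(0, n-1) for n ≥ 2, and suppose g_n are integrable functions with |g_n(ξ)| ≤ C₀ e^{-M(ξ/(2k₀r))} for (n-1) ≤ |ξ| ≤ rn and all n ≥ k₀+1. If 2M(t) ≤ M(Ht) + log A, then with k = 2H²k₀r, Σ_{n ≥ k₀+1} ∫_{ℝ^d} |ψ_n(ξ)| |g_n(ξ)| e^{M(ξ/k)} dξ ≤ A² C′ C₀ (Σ_{n≥k₀} e^{-M(n/k)}) ∫_{ℝ^d} e^{-M(ξ/(2Hk₀r))} dξ < ∞. -/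
open MeasureTheory Metric

lemma assocFn_nonneg (M : ℕ → ℝ) (hpos : ∀ p, 0 < M p) (hM0 : M 0 = 1) (t : ℝ) :
    0 ≤ assocFn M t := by
  unfold assocFn
  split
  · exact le_refl 0
  next h =>
    by_cases hb : BddAbove (Set.range fun p : ℕ => Real.log (t ^ p / M p))
    · calc (0:ℝ) = Real.log (t ^ 0 / M 0) := by simp [hM0]
        _ ≤ _ := le_ciSup hb 0
    · rw [Real.iSup_of_not_bddAbove hb]

lemma bdd_anti (M : ℕ → ℝ) (hpos : ∀ p, 0 < M p) {s t : ℝ} (hs : 0 < s) (hst : s ≤ t)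
    (hb : BddAbove (Set.range fun p : ℕ => Real.log (t ^ p / M p))) :
    BddAbove (Set.range fun p : ℕ => Real.log (s ^ p / M p)) := by
  obtain ⟨b, hbb⟩ := hb
  refine ⟨b, ?_⟩
  rintro x ⟨p, rfl⟩
  have h0 : 0 < s ^ p / M p := div_pos (pow_pos hs p) (hpos p)
  have hd : s ^ p / M p ≤ t ^ p / M p := (div_le_div_iff_of_pos_right (hpos p)).mpr (pow_le_pow_left₀ hs.le hst p)
  exact (Real.log_le_log h0 hd).trans (hbb ⟨p, rfl⟩)

lemma assocFn_mono (M : ℕ → ℝ) (hpos : ∀ p, 0 < M p) (hM0 : M 0 = 1) {s t : ℝ}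
    (hs : 0 < s) (hst : s ≤ t)
    (hb : BddAbove (Set.range fun p : ℕ => Real.log (t ^ p / M p))) :
    assocFn M s ≤ assocFn M t := by
  unfold assocFn
  rw [if_neg (not_le.2 hs), if_neg (not_le.2 (hs.trans_le hst))]
  refine ciSup_mono hb fun p => ?_
  have h0 : 0 < s ^ p / M p := div_pos (pow_pos hs p) (hpos p)
  have hd : s ^ p / M p ≤ t ^ p / M p := (div_le_div_iff_of_pos_right (hpos p)).mpr (pow_le_pow_left₀ hs.le hst p)
  exact Real.log_le_log h0 hd

lemma assocFn_of_not_bdd (M : ℕ → ℝ) {t : ℝ} (ht : 0 < t)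
    (hb : ¬ BddAbove (Set.range fun p : ℕ => Real.log (t ^ p / M p))) :
    assocFn M t = 0 := by
  unfold assocFn
  rw [if_neg (not_le.2 ht), Real.iSup_of_not_bddAbove hb]

lemma assocFn_glob (M : ℕ → ℝ) (hpos : ∀ p, 0 < M p) (hM0 : M 0 = 1)
    (A H : ℝ) (hA : 1 ≤ A) (hH : 1 ≤ H)
    (h2M : ∀ t : ℝ, 0 ≤ t → 2 * assocFn M t ≤ assocFn M (H * t) + Real.log A)
    {u : ℝ} (hu : 0 < u)
    (hnb : ¬ BddAbove (Set.range fun p : ℕ => Real.log (u ^ p / M p))) :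
    ∀ v : ℝ, assocFn M v ≤ Real.log A := by
  have L0 : 0 ≤ Real.log A := Real.log_nonneg hA
  rcases eq_or_lt_of_le hH with hH1 | hH1
  · intro v
    rcases le_or_gt v 0 with hv | hv
    · rw [assocFn, if_pos hv]; exact L0
    · have := h2M v hv.le
      rw [← hH1, one_mul] at this
      linarith
  · have claim : ∀ k : ℕ, ∀ v : ℝ, 0 < v → u ≤ H ^ k * v → assocFn M v ≤ Real.log A := by
      intro k
      induction k with
      | zero =>
        intro v hv huv
        rw [pow_zero, one_mul] at huv
        have : ¬ BddAbove (Set.range fun p : ℕ => Real.log (v ^ p / M p)) :=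
          fun hb => hnb (bdd_anti M hpos hu huv hb)
        rw [assocFn_of_not_bdd M hv this]; exact L0
      | succ k ih =>
        intro v hv huv
        have hHv : 0 < H * v := by positivity
        have h1 : assocFn M (H * v) ≤ Real.log A := by
          refine ih (H * v) hHv ?_
          calc u ≤ H ^ (k+1) * v := huv
            _ = H ^ k * (H * v) := by ring
        have := h2M v hv.le
        linarith
    intro v
    rcases le_or_gt v 0 with hv | hv
    · rw [assocFn, if_pos hv]; exact L0
    · obtain ⟨kk, hkk⟩ := pow_unbounded_of_one_lt (u / v) hH1
      refine claim kk v hv ?_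
      rw [div_lt_iff₀ hv] at hkk
      linarith

lemma assocFn_key (M : ℕ → ℝ) (hpos : ∀ p, 0 < M p) (hM0 : M 0 = 1)
    (A H : ℝ) (hA : 1 ≤ A) (hH : 1 ≤ H)
    (h2M : ∀ t : ℝ, 0 ≤ t → 2 * assocFn M t ≤ assocFn M (H * t) + Real.log A)
    (a : ℝ) (ha : 0 < a) (s t : ℝ) (hs : 0 < s) (hst : s ≤ t) :
    assocFn M (s / (H ^ 2 * a)) + assocFn M (t / (H ^ 2 * a)) + assocFn M (t / (H * a))
      - assocFn M (t / a) ≤ 2 * Real.log A := by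
  have hH0 : 0 < H := lt_of_lt_of_le one_pos hH
  have ht : 0 < t := hs.trans_le hst
  have hu : 0 < t / (H ^ 2 * a) := by positivity
  have hHu : t / (H * a) = H * (t / (H ^ 2 * a)) := by field_simp
  have hH2u : t / a = H * (H * (t / (H ^ 2 * a))) := by field_simp
  rw [hHu, hH2u]
  set u := t / (H ^ 2 * a) with hudef
  have h1 := h2M u hu.le
  have h2 := h2M (H * u) (by positivity)
  by_cases hb : BddAbove (Set.range fun p : ℕ => Real.log (u ^ p / M p))
  · have hw : assocFn M (s / (H ^ 2 * a)) ≤ assocFn M u := by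
      refine assocFn_mono M hpos hM0 (by positivity) ?_ hb
      rw [hudef]; gcongr
    linarith
  · have hx : assocFn M u = 0 := assocFn_of_not_bdd M hu hb
    have hglob := assocFn_glob M hpos hM0 A H hA hH h2M hu hb
    have hw := hglob (s / (H ^ 2 * a))
    have hy := hglob (H * u)
    have hz := assocFn_nonneg M hpos hM0 (H * (H * u))
    linarith

theorem stmt13 (M : ℕ → ℝ) (hpos : ∀ p, 0 < M p) (hM0 : M 0 = 1)
    (A H : ℝ) (hA : 1 ≤ A) (hH : 1 ≤ H)
    (h2M : ∀ t : ℝ, 0 ≤ t → 2 * assocFn M t ≤ assocFn M (H * t) + Real.log A)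
    (d : ℕ) (r k₀ C' C₀ : ℝ) (hr : 1 < r) (hk₀ : 0 < k₀) (hC' : 0 < C') (hC₀ : 0 < C₀)
    (ψ g : ℕ → EuclideanSpace ℝ (Fin d) → ℂ)
    (hψm : ∀ n, Measurable (ψ n)) (hgm : ∀ n, Measurable (g n))
    (hψb : ∀ n ξ, ‖ψ n ξ‖ ≤ C')
    (hψsupp : ∀ n : ℕ, 2 ≤ n → Function.support (ψ n) ⊆
      ball (0 : EuclideanSpace ℝ (Fin d)) (r * n) \ closedBall 0 ((n : ℝ) - 1))
    (hgint : ∀ n, Integrable (g n))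
    (hgb : ∀ n : ℕ, k₀ + 1 ≤ (n : ℝ) → ∀ ξ, (n : ℝ) - 1 ≤ ‖ξ‖ → ‖ξ‖ ≤ r * n →
      ‖g n ξ‖ ≤ C₀ * Real.exp (-assocFn M (‖ξ‖ / (2 * k₀ * r))))
    -- convergence furnished by (NE)
    (hInt : Integrable (fun ξ : EuclideanSpace ℝ (Fin d) =>
      Real.exp (-assocFn M (‖ξ‖ / (2 * H * k₀ * r)))))
    (hSum : Summable (fun n : ℕ => Real.exp (-assocFn M (n / (2 * H ^ 2 * k₀ * r))))) :
    (∑' n : ℕ, Set.indicator {m : ℕ | k₀ + 1 ≤ (m : ℝ)}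
        (fun m => ∫ ξ : EuclideanSpace ℝ (Fin d),
          ‖ψ m ξ‖ * ‖g m ξ‖ * Real.exp (assocFn M (‖ξ‖ / (2 * H ^ 2 * k₀ * r)))) n) ≤
      A ^ 2 * C' * C₀ *
        (∑' n : ℕ, Set.indicator {m : ℕ | k₀ ≤ (m : ℝ)}
          (fun m => Real.exp (-assocFn M (m / (2 * H ^ 2 * k₀ * r)))) n) *
        ∫ ξ : EuclideanSpace ℝ (Fin d),
          Real.exp (-assocFn M (‖ξ‖ / (2 * H * k₀ * r))) := by
  have hH0 : 0 < H := lt_of_lt_of_le one_pos hH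
  have hA0 : 0 < A := lt_of_lt_of_le one_pos hA
  have hr0 : 0 < r := lt_trans one_pos hr
  set I : ℝ := ∫ ξ : EuclideanSpace ℝ (Fin d),
      Real.exp (-assocFn M (‖ξ‖ / (2 * H * k₀ * r))) with hIdef
  have hI0 : 0 ≤ I := integral_nonneg fun ξ => (Real.exp_pos _).le
  set S : Set ℕ := {m : ℕ | k₀ + 1 ≤ (m : ℝ)} with hSdef
  set S' : Set ℕ := {m : ℕ | k₀ ≤ (m : ℝ)} with hS'def
  set f₀ : ℕ → ℝ := fun n => Real.exp (-assocFn M (((n : ℝ) - 1) / (2 * H ^ 2 * k₀ * r)))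
    with hf₀def
  set g₀ : ℕ → ℝ := fun m => Real.exp (-assocFn M ((m : ℝ) / (2 * H ^ 2 * k₀ * r))) with hg₀def
  have hfG : ∀ m : ℕ, S.indicator f₀ (m + 1) = S'.indicator g₀ m := by
    intro m
    by_cases hm : m ∈ S'
    · have hm' : (m + 1 : ℕ) ∈ S := by
        have : k₀ ≤ (m : ℝ) := hm
        show k₀ + 1 ≤ ((m + 1 : ℕ) : ℝ)
        push_cast; linarith
      rw [Set.indicator_of_mem hm', Set.indicator_of_mem hm]
      show Real.exp _ = Real.exp _
      congr 1
      push_cast; ring_nf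
    · have hm' : (m + 1 : ℕ) ∉ S := by
        intro hc
        have : k₀ + 1 ≤ ((m + 1 : ℕ) : ℝ) := hc
        push_cast at this
        exact hm (by show k₀ ≤ (m : ℝ); linarith)
      rw [Set.indicator_of_notMem hm', Set.indicator_of_notMem hm]
  have hGsum : Summable (S'.indicator g₀) := hSum.indicator S'
  have hfsum : Summable (S.indicator f₀) := by
    refine (summable_nat_add_iff 1).mp ?_
    simpa only [hfG] using hGsum
  have htf : ∑' n, S.indicator f₀ n = ∑' m, S'.indicator g₀ m := by
    rw [Summable.tsum_eq_zero_add hfsum]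
    have h0 : S.indicator f₀ 0 = 0 := by
      refine Set.indicator_of_notMem ?_ f₀
      intro hc
      have : k₀ + 1 ≤ ((0 : ℕ) : ℝ) := hc
      push_cast at this; linarith
    rw [h0, zero_add]
    exact tsum_congr hfG
  -- per-term bound
  set φ : ℕ → ℝ := fun m => ∫ ξ : EuclideanSpace ℝ (Fin d),
      ‖ψ m ξ‖ * ‖g m ξ‖ * Real.exp (assocFn M (‖ξ‖ / (2 * H ^ 2 * k₀ * r))) with hφdef
  have hterm : ∀ n : ℕ, S.indicator φ n ≤ (A ^ 2 * C' * C₀ * I) * S.indicator f₀ n := by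
    intro n
    by_cases hn : n ∈ S
    · rw [Set.indicator_of_mem hn, Set.indicator_of_mem hn]
      have hnR : k₀ + 1 ≤ (n : ℝ) := hn
      have hs0 : 0 < (n : ℝ) - 1 := by linarith
      have hn2 : 2 ≤ n := by
        have h1 : (1 : ℝ) < (n : ℝ) := by linarith
        exact_mod_cast Nat.one_lt_cast.mp h1
      have hpt : ∀ ξ : EuclideanSpace ℝ (Fin d),
          ‖ψ n ξ‖ * ‖g n ξ‖ * Real.exp (assocFn M (‖ξ‖ / (2 * H ^ 2 * k₀ * r))) ≤
          (A ^ 2 * C' * C₀ * f₀ n) * Real.exp (-assocFn M (‖ξ‖ / (2 * H * k₀ * r))) := by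
        intro ξ
        by_cases hξ : ψ n ξ = 0
        · rw [hξ]
          simp only [norm_zero, zero_mul]
          have : 0 < f₀ n := Real.exp_pos _
          positivity
        · obtain ⟨hball, hout⟩ := hψsupp n hn2 (Function.mem_support.mpr hξ)
          have h1 : ‖ξ‖ < r * n := by
            rwa [mem_ball, dist_zero_right] at hball
          have h2 : (n : ℝ) - 1 < ‖ξ‖ := by
            by_contra hc
            exact hout (mem_closedBall_zero_iff.mpr (not_lt.mp hc))
          have hgξ := hgb n hnR ξ h2.le h1.le
          have hkey := assocFn_key M hpos hM0 A H hA hH h2M (2 * k₀ * r) (by positivity)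
            ((n : ℝ) - 1) (‖ξ‖) hs0 h2.le
          have e1 : ((n:ℝ) - 1) / (2 * H ^ 2 * k₀ * r) = ((n:ℝ) - 1) / (H ^ 2 * (2 * k₀ * r)) := by
            ring_nf
          have e2 : ‖ξ‖ / (2 * H ^ 2 * k₀ * r) = ‖ξ‖ / (H ^ 2 * (2 * k₀ * r)) := by ring_nf
          have e3 : ‖ξ‖ / (2 * H * k₀ * r) = ‖ξ‖ / (H * (2 * k₀ * r)) := by ring_nf
          rw [← e1, ← e2, ← e3] at hkey
          have hexp : Real.exp (-assocFn M (‖ξ‖ / (2 * k₀ * r))) *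
              Real.exp (assocFn M (‖ξ‖ / (2 * H ^ 2 * k₀ * r))) ≤
              A ^ 2 * (Real.exp (-assocFn M (((n:ℝ) - 1) / (2 * H ^ 2 * k₀ * r))) *
                Real.exp (-assocFn M (‖ξ‖ / (2 * H * k₀ * r)))) := by
            rw [← Real.exp_add, ← Real.exp_add]
            have hA2 : A ^ 2 = Real.exp (2 * Real.log A) := by
              rw [← Real.exp_log hA0, ← Real.exp_nat_mul]
              norm_num
            rw [hA2, ← Real.exp_add]
            exact Real.exp_le_exp.mpr (by linarith)
          calc ‖ψ n ξ‖ * ‖g n ξ‖ * Real.exp (assocFn M (‖ξ‖ / (2 * H ^ 2 * k₀ * r)))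
              ≤ C' * (C₀ * Real.exp (-assocFn M (‖ξ‖ / (2 * k₀ * r)))) *
                Real.exp (assocFn M (‖ξ‖ / (2 * H ^ 2 * k₀ * r))) :=
                mul_le_mul (mul_le_mul (hψb n ξ) hgξ (norm_nonneg _) hC'.le) le_rfl
                  (Real.exp_pos _).le (by positivity)
            _ = (C' * C₀) * (Real.exp (-assocFn M (‖ξ‖ / (2 * k₀ * r))) *
                Real.exp (assocFn M (‖ξ‖ / (2 * H ^ 2 * k₀ * r)))) := by ring
            _ ≤ (C' * C₀) * (A ^ 2 *
                (Real.exp (-assocFn M (((n : ℝ) - 1) / (2 * H ^ 2 * k₀ * r))) *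
                  Real.exp (-assocFn M (‖ξ‖ / (2 * H * k₀ * r))))) :=
                mul_le_mul_of_nonneg_left hexp (by positivity)
            _ = (A ^ 2 * C' * C₀ * f₀ n) * Real.exp (-assocFn M (‖ξ‖ / (2 * H * k₀ * r))) := by
                simp only [hf₀def]; ring
      have hInt' : Integrable (fun ξ : EuclideanSpace ℝ (Fin d) =>
          (A ^ 2 * C' * C₀ * f₀ n) * Real.exp (-assocFn M (‖ξ‖ / (2 * H * k₀ * r)))) :=
        hInt.const_mul _
      calc φ n ≤ ∫ ξ : EuclideanSpace ℝ (Fin d),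
            (A ^ 2 * C' * C₀ * f₀ n) * Real.exp (-assocFn M (‖ξ‖ / (2 * H * k₀ * r))) := by
            refine integral_mono_of_nonneg (Filter.Eventually.of_forall fun ξ => by positivity)
              hInt' (Filter.Eventually.of_forall hpt)
        _ = (A ^ 2 * C' * C₀ * f₀ n) * I := by rw [integral_const_mul]
        _ = (A ^ 2 * C' * C₀ * I) * f₀ n := by ring
    · rw [Set.indicator_of_notMem hn, Set.indicator_of_notMem hn, mul_zero]
  have hφ0 : ∀ n, 0 ≤ S.indicator φ n := by
    intro n
    refine Set.indicator_nonneg (fun m _ => ?_) n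
    exact integral_nonneg fun ξ => by positivity
  have hcsum : Summable (fun n => (A ^ 2 * C' * C₀ * I) * S.indicator f₀ n) := hfsum.mul_left _
  have hφsum : Summable (S.indicator φ) := Summable.of_nonneg_of_le hφ0 hterm hcsum
  calc ∑' n, S.indicator φ n ≤ ∑' n, (A ^ 2 * C' * C₀ * I) * S.indicator f₀ n :=
        Summable.tsum_le_tsum hterm hφsum hcsum
    _ = (A ^ 2 * C' * C₀ * I) * ∑' n, S.indicator f₀ n := tsum_mul_left
    _ = (A ^ 2 * C' * C₀ * I) * ∑' m, S'.indicator g₀ m := by rw [htf]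
    _ = A ^ 2 * C' * C₀ * (∑' m, S'.indicator g₀ m) * I := by ring
end
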